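/- arXiv:0904.4039 — 7 statements merged into one kernel-verified Lean document; each statement's English description precedes it below -/
import Mathlib

section
/- In a connected graph with no separating (bridge) edges, every edge is contained in a unique C1-set, where two edges belong to the same C1-set if and only if removing both of them disconnects the graph. -/
structure Multigraph (V E : Type) where
  ends : E → Sym2 V

namespace Multigraph

variable {V E : Type} (G : Multigraph V E)

def adjOn (F : Set E) (v w : V) : Prop := ∃ e ∈ F, G.ends e = s(v, w)

def ConnectedOn (F : Set E) : Prop := ∀ v w : V, Relation.ReflTransGen (G.adjOn F) v w

def Connected : Prop := G.ConnectedOn Set.univ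

def Bridgeless : Prop := ∀ e : E, G.ConnectedOn ({e} : Set E)ᶜ

def SameC1 (e f : E) : Prop := e = f ∨ ¬ G.ConnectedOn ({e, f} : Set E)ᶜ

def IsC1Set (S : Set E) : Prop := ∃ e : E, S = {f | G.SameC1 e f}

def compRel (S : Set E) (v w : V) : Prop := ∃ e ∉ S, G.ends e = s(v, w)

def contract (S : Set E) : Multigraph (Quot (G.compRel S)) {e // e ∈ S} :=
  ⟨fun e => (G.ends e.1).map (Quot.mk (G.compRel S))⟩

noncomputable def degree (v : V) : ℕ :=
  Nat.card {e : E // v ∈ G.ends e ∧ G.ends e ≠ s(v, v)} +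
    2 * Nat.card {e : E // G.ends e = s(v, v)}

def IsCycleGraph : Prop :=
  G.Connected ∧ 1 ≤ Nat.card E ∧ Nat.card E = Nat.card V ∧ ∀ v : V, G.degree v = 2

noncomputable def numComponents : ℕ := Nat.card (Quot (G.compRel (∅ : Set E)))

noncomputable def b1 : ℤ := (Nat.card E : ℤ) - (Nat.card V : ℤ) + (G.numComponents : ℤ)

end Multigraph

/-!
Deleting a set `S` of edges disconnects the graph exactly when some proper vertex set `A`
has all its boundary edges in `S`. In a bridgeless graph such a cut with boundary inside
`{e, f}` has boundary exactly `{e, f}`. Edge boundaries add up along the symmetric difference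
of vertex sets, so cuts with boundaries `{e, f}` and `{f, g}` combine into one with
boundary `{e, g}`, which gives transitivity.
-/

open scoped symmDiff

namespace Multigraph

variable {V E : Type} (G : Multigraph V E)

def edgeBoundary (A : Set V) : Set E :=
  {x | ∃ a b, G.ends x = s(a, b) ∧ a ∈ A ∧ b ∉ A}

variable {G}

lemma mem_edgeBoundary_iff {A : Set V} {x : E} {p q : V} (hx : G.ends x = s(p, q)) :
    x ∈ G.edgeBoundary A ↔ (p ∈ A ↔ q ∉ A) := by
  constructor
  · rintro ⟨a, b, hab, ha, hb⟩
    rcases Sym2.eq_iff.mp (hx.symm.trans hab) with ⟨rfl, rfl⟩ | ⟨rfl, rfl⟩ <;> tauto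
  · intro h
    by_cases hp : p ∈ A
    · exact ⟨p, q, hx, hp, h.mp hp⟩
    · exact ⟨q, p, hx.trans Sym2.eq_swap, not_not.mp (mt h.mpr hp), hp⟩

lemma edgeBoundary_symmDiff (A C : Set V) :
    G.edgeBoundary (A ∆ C) = G.edgeBoundary A ∆ G.edgeBoundary C := by
  ext x
  induction hx : G.ends x using Sym2.ind with
  | h p q =>
    simp only [Set.mem_symmDiff, mem_edgeBoundary_iff hx]
    tauto

lemma nonempty_of_mem_edgeBoundary {A : Set V} {x : E} (hx : x ∈ G.edgeBoundary A) :
    A.Nonempty ∧ Aᶜ.Nonempty := by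
  obtain ⟨a, b, -, ha, hb⟩ := hx
  exact ⟨⟨a, ha⟩, ⟨b, hb⟩⟩

lemma not_connectedOn_compl_iff {S : Set E} :
    ¬ G.ConnectedOn Sᶜ ↔ ∃ A : Set V, A.Nonempty ∧ Aᶜ.Nonempty ∧ G.edgeBoundary A ⊆ S := by
  constructor
  · intro h
    simp only [ConnectedOn, not_forall] at h
    obtain ⟨v, w, hvw⟩ := h
    refine ⟨{x | Relation.ReflTransGen (G.adjOn Sᶜ) v x}, ⟨v, .refl⟩, ⟨w, hvw⟩, ?_⟩
    rintro x ⟨a, b, hab, ha, hb⟩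
    by_contra hxS
    exact hb (ha.tail ⟨x, hxS, hab⟩)
  · rintro ⟨A, ⟨v, hv⟩, ⟨w, hw⟩, hAS⟩ hcon
    have reach_mem : ∀ u, Relation.ReflTransGen (G.adjOn Sᶜ) v u → u ∈ A := by
      intro u hu
      induction hu with
      | refl => exact hv
      | @tail b c _ hbc hb =>
        obtain ⟨x, hxS, hx⟩ := hbc
        by_contra hc
        exact hxS (hAS ⟨b, c, hx, hb, hc⟩)
    exact hw (reach_mem w (hcon v w))

lemma edgeBoundary_eq_pair (hbl : G.Bridgeless) {A : Set V} {e f : E}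
    (hA : A.Nonempty) (hAc : Aᶜ.Nonempty) (hAef : G.edgeBoundary A ⊆ {e, f}) :
    G.edgeBoundary A = {e, f} := by
  have mem_of_subset_pair : ∀ {e f : E}, G.edgeBoundary A ⊆ {e, f} → e ∈ G.edgeBoundary A := by
    intro e f hAef
    by_contra he
    refine not_connectedOn_compl_iff.mpr ⟨A, hA, hAc, fun x hx => ?_⟩ (hbl f)
    rcases hAef hx with rfl | rfl
    · exact absurd hx he
    · rfl
  refine hAef.antisymm (Set.insert_subset (mem_of_subset_pair hAef) ?_)
  exact Set.singleton_subset_iff.mpr (mem_of_subset_pair (Set.pair_comm e f ▸ hAef))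

lemma not_connectedOn_pair_trans (hbl : G.Bridgeless) {e f g : E}
    (hef : e ≠ f) (hfg : f ≠ g) (heg : e ≠ g)
    (h₁ : ¬ G.ConnectedOn ({e, f} : Set E)ᶜ) (h₂ : ¬ G.ConnectedOn ({f, g} : Set E)ᶜ) :
    ¬ G.ConnectedOn ({e, g} : Set E)ᶜ := by
  obtain ⟨A, hA, hAc, hAef⟩ := not_connectedOn_compl_iff.mp h₁
  obtain ⟨C, hC, hCc, hCfg⟩ := not_connectedOn_compl_iff.mp h₂
  have hAC : G.edgeBoundary (A ∆ C) = {e, g} := by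
    rw [edgeBoundary_symmDiff, edgeBoundary_eq_pair hbl hA hAc hAef,
      edgeBoundary_eq_pair hbl hC hCc hCfg]
    ext x
    simp only [Set.mem_symmDiff, Set.mem_insert_iff, Set.mem_singleton_iff]
    grind
  have hproper := nonempty_of_mem_edgeBoundary (hAC.ge (Set.mem_insert e {g}))
  exact not_connectedOn_compl_iff.mpr ⟨A ∆ C, hproper.1, hproper.2, hAC.le⟩

lemma sameC1_equivalence (hbl : G.Bridgeless) : Equivalence G.SameC1 where
  refl _ := .inl rfl
  symm := by
    rintro e f (rfl | h)
    · exact .inl rfl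
    · exact .inr (Set.pair_comm e f ▸ h)
  trans := by
    rintro e f g (rfl | h₁) (rfl | h₂)
    · exact .inl rfl
    · exact .inr h₂
    · exact .inr h₁
    · by_cases hef : e = f
      · exact hef ▸ .inr h₂
      by_cases hfg : f = g
      · exact hfg ▸ .inr h₁
      by_cases heg : e = g
      · exact .inl heg
      exact .inr (not_connectedOn_pair_trans hbl hef hfg heg h₁ h₂)

end Multigraph

theorem stmt0_general {V E : Type} (G : Multigraph V E)
    (hbl : G.Bridgeless) :
    Equivalence G.SameC1 ∧ ∀ e : E, ∃! S : Set E, G.IsC1Set S ∧ e ∈ S := by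
  have hequiv := G.sameC1_equivalence hbl
  let r : Setoid E := ⟨G.SameC1, hequiv⟩
  have isC1Set_iff : ∀ S, G.IsC1Set S ↔ S ∈ r.classes := fun S =>
    exists_congr fun e => by
      rw [show {f | G.SameC1 e f} = {f | r f e} from Set.ext fun _ => ⟨hequiv.symm, hequiv.symm⟩]
  refine ⟨hequiv, fun e => ?_⟩
  simpa only [isC1Set_iff] using r.classes_eqv_classes e

/-- In a finite connected multigraph with no separating (bridge) edges,
the relation "e = f or deleting both e and f disconnects the graph" is an equivalence
relation on edges, and hence every edge is contained in a unique C1-set. -/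
theorem stmt0 {V E : Type} [Finite V] [Finite E] (G : Multigraph V E)
    (hconn : G.Connected) (hbl : G.Bridgeless) :
    Equivalence G.SameC1 ∧ ∀ e : E, ∃! S : Set E, G.IsC1Set S ∧ e ∈ S :=
  stmt0_general G hbl
end

section
/- In a connected graph with no separating edges, two distinct edges belong to the same C1-set if and only if they belong to exactly the same cycles of the graph. -/
/-- A cycle of a multigraph: a closed walk with no repeated edges. -/
structure Multigraph.ClosedTrail {V E : Type} (G : Multigraph V E) where
  n : ℕ
  npos : 0 < n
  vert : Fin (n + 1) → V
  edge : Fin n → E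
  closed : vert (Fin.last n) = vert 0
  compat : ∀ i : Fin n, G.ends (edge i) = s(vert i.castSucc, vert i.succ)
  inj : Function.Injective edge

/-!
If a cycle passes through `e₁` but not `e₂`, the rest of the cycle joins the ends of `e₁` in
`Γ - {e₁, e₂}`, so every path of the connected graph `Γ - e₂` can be rerouted around `e₁`.
Conversely, if `Γ - {e₁, e₂}` is connected, a path in it between the ends of `e₁`, shortened to
a trail, closes up with `e₁` to a cycle avoiding `e₂`.
-/

namespace Multigraph

open Relation

variable {V E : Type} {G : Multigraph V E}

instance (F : Set E) : Std.Symm (G.adjOn F) :=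
  ⟨fun _ _ ⟨e, he, hends⟩ => ⟨e, he, hends.trans Sym2.eq_swap⟩⟩

lemma ConnectedOn.mono {F F' : Set E} (h : G.ConnectedOn F) (hF : F ⊆ F') : G.ConnectedOn F' :=
  fun v w => ReflTransGen.mono (fun _ _ ⟨e, he, hends⟩ => ⟨e, hF he, hends⟩) _ _ (h v w)

lemma ConnectedOn.of_insert {F : Set E} {e : E} {x y : V} (h : G.ConnectedOn (insert e F))
    (he : G.ends e = s(x, y)) (hxy : ReflTransGen (G.adjOn F) x y) : G.ConnectedOn F := by
  intro v w
  refine (h v w).lift' id fun a b ⟨f, hf, hends⟩ => ?_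
  rcases hf with rfl | hf
  · rcases Sym2.eq_iff.mp (he.symm.trans hends) with ⟨rfl, rfl⟩ | ⟨rfl, rfl⟩
    · exact hxy
    · exact symm hxy
  · exact .single ⟨f, hf, hends⟩

namespace ClosedTrail

lemma reflTransGen_vert (t : G.ClosedTrail) {F : Set E} {a b : ℕ} (hab : a ≤ b) (hb : b ≤ t.n)
    (hF : ∀ j : Fin t.n, a ≤ j.val → j.val < b → t.edge j ∈ F) :
    ReflTransGen (G.adjOn F) (t.vert ⟨a, by omega⟩) (t.vert ⟨b, by omega⟩) := by
  induction b, hab using Nat.le_induction with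
  | base => rfl
  | succ b hab ih =>
    exact (ih (by omega) fun j h₁ h₂ => hF j h₁ (by omega)).tail
      ⟨t.edge ⟨b, by omega⟩, hF _ hab (Nat.lt_succ_self b), t.compat _⟩

lemma reflTransGen_adjOn_ends (t : G.ClosedTrail) {F : Set E} (i : Fin t.n)
    (hF : ∀ j, j ≠ i → t.edge j ∈ F) :
    ReflTransGen (G.adjOn F) (t.vert i.castSucc) (t.vert i.succ) := by
  have hstart : ReflTransGen (G.adjOn F) (t.vert 0) (t.vert i.castSucc) :=
    t.reflTransGen_vert (Nat.zero_le _) i.isLt.le fun j _ hj => hF j (Fin.ne_of_lt hj)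
  have hend : ReflTransGen (G.adjOn F) (t.vert i.succ) (t.vert (Fin.last t.n)) :=
    t.reflTransGen_vert i.isLt le_rfl fun j hj _ => hF j (Fin.ne_of_gt hj)
  rw [t.closed] at hend
  exact (symm hstart).trans (symm hend)

end ClosedTrail

lemma connectedOn_compl_pair_of_mem_closedTrail (hbl : G.Bridgeless) (t : G.ClosedTrail)
    {e₁ e₂ : E} {i : Fin t.n} (hi : t.edge i = e₁) (h₂ : ∀ j, t.edge j ≠ e₂) :
    G.ConnectedOn ({e₁, e₂} : Set E)ᶜ := by
  have hF : ∀ j, j ≠ i → t.edge j ∈ ({e₁, e₂} : Set E)ᶜ := by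
    intro j hj
    simp only [Set.mem_compl_iff, Set.mem_insert_iff, Set.mem_singleton_iff, not_or]
    exact ⟨fun h => hj (t.inj (h.trans hi.symm)), h₂ j⟩
  refine ConnectedOn.of_insert ((hbl e₂).mono ?_) (hi ▸ t.compat i)
    (t.reflTransGen_adjOn_ends i hF)
  intro f
  simp only [Set.mem_compl_iff, Set.mem_singleton_iff, Set.mem_insert_iff]
  tauto

def IsWalk (G : Multigraph V E) : V → List E → V → Prop
  | v, [], w => v = w
  | v, e :: es, w => ∃ u, G.ends e = s(v, u) ∧ G.IsWalk u es w

lemma isWalk_append {v w : V} {es fs : List E} :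
    G.IsWalk v (es ++ fs) w ↔ ∃ u, G.IsWalk v es u ∧ G.IsWalk u fs w := by
  induction es generalizing v with
  | nil => simp [IsWalk]
  | cons e es ih =>
    simp only [List.cons_append, IsWalk, ih]
    exact ⟨fun ⟨u, h, x, h₁, h₂⟩ => ⟨x, ⟨u, h, h₁⟩, h₂⟩,
      fun ⟨x, ⟨u, h, h₁⟩, h₂⟩ => ⟨u, h, x, h₁, h₂⟩⟩

lemma exists_isWalk_of_reflTransGen {F : Set E} {v w : V} (h : ReflTransGen (G.adjOn F) v w) :
    ∃ es : List E, G.IsWalk v es w ∧ ∀ e ∈ es, e ∈ F := by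
  induction h using ReflTransGen.head_induction_on with
  | refl => exact ⟨[], rfl, by simp⟩
  | head hstep _ ih =>
    obtain ⟨e, he, hends⟩ := hstep
    obtain ⟨es, hwalk, hes⟩ := ih
    exact ⟨e :: es, ⟨_, hends, hwalk⟩, List.forall_mem_cons.mpr ⟨he, hes⟩⟩

lemma IsWalk.exists_nodup_subset {v w : V} {es : List E} (h : G.IsWalk v es w) :
    ∃ ts : List E, G.IsWalk v ts w ∧ ts.Nodup ∧ ts ⊆ es := by
  induction es generalizing v with
  | nil => exact ⟨[], h, List.nodup_nil, List.Subset.refl _⟩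
  | cons e es ih =>
    obtain ⟨u, hends, hwalk⟩ := h
    obtain ⟨ts, hts, hnd, hsub⟩ := ih hwalk
    by_cases he : e ∈ ts
    · -- shortcut from `v` straight to the later traversal of `e`
      obtain ⟨pre, post, rfl⟩ := List.append_of_mem he
      obtain ⟨x, -, y, hends', hpost⟩ := isWalk_append.mp hts
      have hnd' : (e :: post).Nodup := hnd.sublist (List.sublist_append_right _ _)
      have hpost_sub : post ⊆ e :: es := fun f hf => List.mem_cons_of_mem _ (hsub (by simp [hf]))
      rcases Sym2.eq_iff.mp (hends.symm.trans hends') with ⟨rfl, rfl⟩ | ⟨rfl, rfl⟩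
      · exact ⟨e :: post, ⟨_, hends, hpost⟩, hnd', List.cons_subset.mpr ⟨by simp, hpost_sub⟩⟩
      · exact ⟨post, hpost, hnd'.of_cons, hpost_sub⟩
    · exact ⟨e :: ts, ⟨u, hends, hts⟩, hnd.cons he, List.cons_subset_cons e hsub⟩

lemma IsWalk.exists_vert {v w : V} {es : List E} (h : G.IsWalk v es w) :
    ∃ vert : Fin (es.length + 1) → V, vert 0 = v ∧ vert (Fin.last _) = w ∧
      ∀ i, G.ends (es.get i) = s(vert i.castSucc, vert i.succ) := by
  induction es generalizing v with
  | nil => exact ⟨fun _ => v, rfl, h, fun i => i.elim0⟩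
  | cons e es ih =>
    obtain ⟨u, hends, hwalk⟩ := h
    obtain ⟨vert, h₀, hlast, hcompat⟩ := ih hwalk
    refine ⟨Fin.cons v vert, rfl, by simpa [← Fin.succ_last] using hlast, Fin.cases ?_ ?_⟩
    · simpa [h₀] using hends
    · intro j
      simpa [← Fin.succ_castSucc] using hcompat j

lemma IsWalk.exists_closedTrail {v : V} {es : List E} (h : G.IsWalk v es v) (hnd : es.Nodup)
    (hne : es ≠ []) : ∃ t : G.ClosedTrail, ∀ e, (∃ i, t.edge i = e) ↔ e ∈ es := by
  obtain ⟨vert, h₀, hlast, hcompat⟩ := h.exists_vert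
  exact ⟨⟨es.length, List.length_pos_of_ne_nil hne, vert, es.get, hlast.trans h₀.symm, hcompat,
    List.nodup_iff_injective_get.mp hnd⟩, fun _ => List.mem_iff_get.symm⟩

lemma exists_closedTrail_of_reflTransGen {F : Set E} {e : E} {v w : V} (he : G.ends e = s(v, w))
    (heF : e ∉ F) (hwv : ReflTransGen (G.adjOn F) w v) :
    ∃ t : G.ClosedTrail, (∃ i, t.edge i = e) ∧ ∀ i, t.edge i = e ∨ t.edge i ∈ F := by
  obtain ⟨es, hwalk, hesF⟩ := exists_isWalk_of_reflTransGen hwv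
  obtain ⟨ts, hts, hnd, hsub⟩ := hwalk.exists_nodup_subset
  have htsF : ∀ f ∈ ts, f ∈ F := fun f hf => hesF f (hsub hf)
  obtain ⟨t, ht⟩ := IsWalk.exists_closedTrail (es := e :: ts) ⟨w, he, hts⟩
    (hnd.cons fun h => heF (htsF e h)) (List.cons_ne_nil _ _)
  refine ⟨t, (ht e).mpr List.mem_cons_self, fun i => ?_⟩
  rcases List.mem_cons.mp ((ht _).mp ⟨i, rfl⟩) with h | h
  · exact .inl h
  · exact .inr (htsF _ h)

end Multigraph

theorem stmt1_general {V E : Type} (G : Multigraph V E)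
    (hbl : G.Bridgeless) (e₁ e₂ : E) (hne : e₁ ≠ e₂) :
    (¬ G.ConnectedOn ({e₁, e₂} : Set E)ᶜ) ↔
      ∀ t : G.ClosedTrail, (∃ i, t.edge i = e₁) ↔ (∃ i, t.edge i = e₂) := by
  refine ⟨fun hdisc t => ⟨fun ⟨i, hi⟩ => ?_, fun ⟨i, hi⟩ => ?_⟩, fun hsame hconn => ?_⟩
  · by_contra! h₂
    exact hdisc (Multigraph.connectedOn_compl_pair_of_mem_closedTrail hbl t hi h₂)
  · by_contra! h₁
    rw [Set.pair_comm] at hdisc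
    exact hdisc (Multigraph.connectedOn_compl_pair_of_mem_closedTrail hbl t hi h₁)
  · obtain ⟨v, w, hvw⟩ := Sym2.exists.mp ⟨G.ends e₁, rfl⟩
    obtain ⟨t, he₁, htF⟩ :=
      Multigraph.exists_closedTrail_of_reflTransGen hvw (by simp) (hconn w v)
    obtain ⟨i, hi⟩ := (hsame t).mp he₁
    rcases htF i with h | h
    · exact hne (h.symm.trans hi)
    · exact h (by simp [hi])

/-- In a finite connected multigraph with no separating edges, two distinct
edges belong to the same C1-set (deleting both disconnects the graph) if and only if they
belong to exactly the same cycles of the graph. -/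
theorem stmt1 {V E : Type} [Finite V] [Finite E] (G : Multigraph V E)
    (hconn : G.Connected) (hbl : G.Bridgeless) (e₁ e₂ : E) (hne : e₁ ≠ e₂) :
    (¬ G.ConnectedOn ({e₁, e₂} : Set E)ᶜ) ↔
      ∀ t : G.ClosedTrail, (∃ i, t.edge i = e₁) ↔ (∃ i, t.edge i = e₂) :=
  stmt1_general G hbl e₁ e₂ hne
end

section
/- Let X be a connected nodal curve (equivalently, a connected bridgeless graph Γ = Γ_X) free from separating nodes, and let S and T be two distinct C1-sets. Then T is entirely contained in the edge set of a unique connected component of Γ \ S. -/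
/-!
Write `∂A` for the set of edges leaving a vertex set `A`; boundaries add mod 2,
`∂(A ∆ B) = ∂A ∆ ∂B`. In a bridgeless graph, `e ~ f` with `e ≠ f` means exactly that
`{e, f} = ∂A` for some `A`. The key fact is that an edge `f` outside a C1-set `S` is never
the only non-`S` edge of a boundary: otherwise pick the smallest such boundary; it must contain
two edges `s₁, s₂ ∈ S` (one would make `f ~ s₁`, none would make `f` a bridge), and adding the
boundary `{s₁, s₂}` gives a smaller one. Now if `f ~ g` lie outside `S` but in different
components of `Γ \ S`, intersect a set `A` with `∂A = {f, g}` with the component `C` of `f`: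
the boundary of `A ∩ C` contains `f`, misses `g`, and otherwise consists of edges of `S`.
-/

namespace Multigraph

variable {V E : Type}

def boundary (G : Multigraph V E) (A : Set V) : Set E :=
  {e | ∃ p ∈ A, ∃ q ∉ A, G.ends e = s(p, q)}

variable {G : Multigraph V E}

lemma exists_ends_eq (e : E) : ∃ p q, G.ends e = s(p, q) :=
  Sym2.ind (fun p q => ⟨p, q, rfl⟩) (G.ends e)

lemma mem_boundary_iff {A : Set V} {e : E} {p q : V} (h : G.ends e = s(p, q)) :
    e ∈ G.boundary A ↔ ¬(p ∈ A ↔ q ∈ A) := by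
  constructor
  · rintro ⟨x, hx, y, hy, hxy⟩
    rw [h, Sym2.eq_iff] at hxy
    rcases hxy with ⟨rfl, rfl⟩ | ⟨rfl, rfl⟩ <;> tauto
  · intro hpq
    by_cases hp : p ∈ A
    · exact ⟨p, hp, q, by tauto, h⟩
    · exact ⟨q, by tauto, p, hp, by rw [h, Sym2.eq_swap]⟩

lemma boundary_symmDiff (A B : Set V) :
    G.boundary (symmDiff A B) = symmDiff (G.boundary A) (G.boundary B) := by
  ext e
  obtain ⟨p, q, h⟩ := exists_ends_eq (G := G) e
  simp only [Set.mem_symmDiff, mem_boundary_iff h]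
  tauto

lemma mem_boundary_inter {A B : Set V} {e : E} (he : e ∈ G.boundary A)
    (hB : ∀ v ∈ G.ends e, v ∈ B) : e ∈ G.boundary (A ∩ B) := by
  obtain ⟨p, hp, q, hq, h⟩ := he
  exact ⟨p, ⟨hp, hB p (h ▸ Sym2.mem_mk_left p q)⟩, q, fun hq' => hq hq'.1, h⟩

lemma notMem_boundary_inter {A B : Set V} {e : E} (hB : ∀ v ∈ G.ends e, v ∉ B) :
    e ∉ G.boundary (A ∩ B) := by
  rintro ⟨p, hp, q, -, h⟩
  exact hB p (h ▸ Sym2.mem_mk_left p q) hp.2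

lemma boundary_inter_subset (A B : Set V) :
    G.boundary (A ∩ B) ⊆ G.boundary A ∪ G.boundary B := by
  intro e he
  obtain ⟨p, q, h⟩ := exists_ends_eq (G := G) e
  simp only [Set.mem_union, mem_boundary_iff h, Set.mem_inter_iff] at he ⊢
  tauto

lemma mem_iff_mem_of_reflTransGen {K : Set E} {A : Set V} (hA : G.boundary A ⊆ K) {v w : V}
    (h : Relation.ReflTransGen (G.adjOn Kᶜ) v w) : v ∈ A ↔ w ∈ A := by
  induction h with
  | refl => rfl
  | tail _ hstep ih =>
    obtain ⟨e, he, h⟩ := hstep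
    have hnot : e ∉ G.boundary A := fun hb => he (hA hb)
    rw [mem_boundary_iff h, not_not] at hnot
    exact ih.trans hnot

lemma ConnectedOn.mem_iff_mem {K : Set E} (hK : G.ConnectedOn Kᶜ) {A : Set V}
    (hA : G.boundary A ⊆ K) (v w : V) : v ∈ A ↔ w ∈ A :=
  mem_iff_mem_of_reflTransGen hA (hK v w)

lemma not_connectedOn_of_mem_boundary {K : Set E} {A : Set V} {e : E}
    (hA : G.boundary A ⊆ K) (he : e ∈ G.boundary A) : ¬ G.ConnectedOn Kᶜ := by
  obtain ⟨p, hp, q, hq, -⟩ := he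
  exact fun hK => hq ((hK.mem_iff_mem hA p q).mp hp)

lemma boundary_reachable_subset (K : Set E) (a : V) :
    G.boundary {v | Relation.ReflTransGen (G.adjOn Kᶜ) a v} ⊆ K := by
  rintro e ⟨p, hp, q, hq, h⟩
  by_contra heK
  exact hq (hp.tail ⟨e, heK, h⟩)

lemma boundary_quotMk_preimage_subset (K : Set E) (c : Quot (G.compRel K)) :
    G.boundary {v | Quot.mk (G.compRel K) v = c} ⊆ K := by
  rintro e ⟨p, hp, q, hq, h⟩
  by_contra heK
  exact hq ((Quot.sound ⟨e, heK, h⟩).symm.trans hp)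

lemma quotMk_eq_of_mem_ends {K : Set E} {e : E} (he : e ∉ K) {v w : V}
    (hv : v ∈ G.ends e) (hw : w ∈ G.ends e) :
    Quot.mk (G.compRel K) v = Quot.mk (G.compRel K) w := by
  obtain ⟨p, q, h⟩ := exists_ends_eq (G := G) e
  have hpq : Quot.mk (G.compRel K) p = Quot.mk (G.compRel K) q := Quot.sound ⟨e, he, h⟩
  rw [h, Sym2.mem_iff] at hv hw
  rcases hv with rfl | rfl <;> rcases hw with rfl | rfl <;> simp [hpq]

lemma Bridgeless.not_boundary_subset_singleton (hbl : G.Bridgeless) {A : Set V} {e f : E}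
    (he : e ∈ G.boundary A) : ¬ G.boundary A ⊆ {f} :=
  fun hA => not_connectedOn_of_mem_boundary hA he (hbl f)

lemma Bridgeless.exists_boundary_eq_pair (hbl : G.Bridgeless) {e f : E}
    (h : ¬ G.ConnectedOn ({e, f} : Set E)ᶜ) : ∃ A : Set V, G.boundary A = {e, f} := by
  obtain ⟨a, b, hab⟩ : ∃ a b, ¬ Relation.ReflTransGen (G.adjOn ({e, f} : Set E)ᶜ) a b := by
    simpa [ConnectedOn] using h
  set A := {v | Relation.ReflTransGen (G.adjOn ({e, f} : Set E)ᶜ) a v}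
  have hA : G.boundary A ⊆ {e, f} := boundary_reachable_subset _ a
  have mem : ∀ {x y : E}, G.boundary A ⊆ {x, y} → x ∈ G.boundary A := by
    intro x y hxy
    by_contra hx
    have hy : G.boundary A ⊆ {y} := fun w hw => (hxy hw).resolve_left fun hwx => hx (hwx ▸ hw)
    exact hab (((hbl y).mem_iff_mem hy a b).mp .refl)
  exact ⟨A, hA.antisymm (Set.insert_subset (mem hA) (Set.singleton_subset_iff.mpr
    (mem (Set.pair_comm e f ▸ hA))))⟩

lemma sameC1_of_mem_boundary {A : Set V} {e f : E} (hA : G.boundary A ⊆ {e, f})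
    (he : e ∈ G.boundary A) : G.SameC1 e f :=
  Or.inr (not_connectedOn_of_mem_boundary hA he)

lemma SameC1.symm {e f : E} (h : G.SameC1 e f) : G.SameC1 f e := by
  rcases h with rfl | h
  · exact Or.inl rfl
  · exact Or.inr (by rwa [Set.pair_comm])

lemma Bridgeless.ne_of_not_connectedOn_pair (hbl : G.Bridgeless) {e f : E}
    (h : ¬ G.ConnectedOn ({e, f} : Set E)ᶜ) : e ≠ f := by
  rintro rfl
  exact h (by simpa using hbl e)

lemma SameC1.trans (hbl : G.Bridgeless) {a b c : E} (hab : G.SameC1 a b)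
    (hbc : G.SameC1 b c) : G.SameC1 a c := by
  rcases hab with rfl | hab
  · exact hbc
  rcases hbc with rfl | hbc
  · exact Or.inr hab
  by_cases hac : a = c
  · exact Or.inl hac
  have hab' := hbl.ne_of_not_connectedOn_pair hab
  obtain ⟨A, hA⟩ := hbl.exists_boundary_eq_pair hab
  obtain ⟨B, hB⟩ := hbl.exists_boundary_eq_pair hbc
  refine sameC1_of_mem_boundary (A := symmDiff A B) ?_ ?_ <;>
    rw [boundary_symmDiff, hA, hB]
  · intro x hx
    simp only [Set.mem_symmDiff, Set.mem_insert_iff, Set.mem_singleton_iff] at hx ⊢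
    tauto
  · simp [Set.mem_symmDiff, hab', hac]

namespace IsC1Set

variable {S T : Set E}

lemma nonempty (hS : G.IsC1Set S) : S.Nonempty := by
  obtain ⟨e, rfl⟩ := hS
  exact ⟨e, Or.inl rfl⟩

lemma sameC1 (hbl : G.Bridgeless) (hS : G.IsC1Set S) {e f : E} (he : e ∈ S) (hf : f ∈ S) :
    G.SameC1 e f := by
  obtain ⟨x, rfl⟩ := hS
  exact SameC1.trans hbl (SameC1.symm he) hf

lemma mem_of_sameC1 (hbl : G.Bridgeless) (hS : G.IsC1Set S) {e f : E} (he : e ∈ S)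
    (h : G.SameC1 e f) : f ∈ S := by
  obtain ⟨x, rfl⟩ := hS
  exact SameC1.trans hbl he h

lemma eq_of_mem (hbl : G.Bridgeless) (hS : G.IsC1Set S) (hT : G.IsC1Set T) {e : E}
    (heS : e ∈ S) (heT : e ∈ T) : S = T :=
  Set.ext fun _ => ⟨fun hf => hT.mem_of_sameC1 hbl heT (hS.sameC1 hbl heS hf),
    fun hf => hS.mem_of_sameC1 hbl heS (hT.sameC1 hbl heT hf)⟩

/-- An edge outside a C1-set `S` is not a bridge of `Γ \ S`, phrased via boundaries. -/
lemma mem_of_mem_boundary [Finite E] (hbl : G.Bridgeless) (hS : G.IsC1Set S) {f : E}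
    {A : Set V} (hf : f ∈ G.boundary A) (hA : G.boundary A ⊆ insert f S) : f ∈ S := by
  suffices ∀ F : Set E, ∀ A : Set V, G.boundary A = F → f ∈ F → F ⊆ insert f S → f ∈ S from
    this _ A rfl hf hA
  intro F
  induction F using WellFoundedLT.induction with
  | _ F ih =>
    intro A hAF hf hF
    by_contra hfS
    obtain ⟨s₁, hs₁F, hs₁S⟩ : ∃ s ∈ F, s ∈ S := by
      by_contra! hno
      refine hbl.not_boundary_subset_singleton (f := f) (hAF ▸ hf) fun e he => ?_
      exact (hF (hAF ▸ he)).resolve_right (hno e (hAF ▸ he))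
    obtain ⟨s₂, hs₂F, hs₂f, hs₂s₁⟩ : ∃ s ∈ F, s ≠ f ∧ s ≠ s₁ := by
      by_contra! hno
      refine hfS (hS.mem_of_sameC1 hbl hs₁S (sameC1_of_mem_boundary (A := A) ?_ (hAF ▸ hs₁F)))
      intro e he
      by_cases hef : e = f
      · exact Or.inr hef
      · exact Or.inl (hno e (hAF ▸ he) hef)
    have hs₂S : s₂ ∈ S := (hF hs₂F).resolve_left hs₂f
    obtain ⟨B, hB⟩ := hbl.exists_boundary_eq_pair
      ((hS.sameC1 hbl hs₁S hs₂S).resolve_left hs₂s₁.symm)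
    have hsub : ({s₁, s₂} : Set E) ⊆ F :=
      Set.insert_subset hs₁F (Set.singleton_subset_iff.mpr hs₂F)
    have hAB : G.boundary (symmDiff A B) = F \ {s₁, s₂} := by
      rw [boundary_symmDiff, hAF, hB, symmDiff_of_ge hsub]
    refine hfS (ih _ (sdiff_lt hsub (Set.insert_nonempty _ _).ne_empty) _ hAB ⟨hf, ?_⟩
      (Set.sdiff_subset.trans hF))
    rintro (h | h)
    · exact hfS (h ▸ hs₁S)
    · exact hs₂f h.symm

lemma quotMk_eq_of_sameC1 [Finite E] (hbl : G.Bridgeless) (hS : G.IsC1Set S) {f g : E}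
    (hf : f ∉ S) (hg : g ∉ S) (hfg : G.SameC1 f g) {p q : V} (hp : p ∈ G.ends f)
    (hq : q ∈ G.ends g) : Quot.mk (G.compRel S) p = Quot.mk (G.compRel S) q := by
  by_contra hne
  rcases hfg with rfl | hfg
  · exact hne (quotMk_eq_of_mem_ends hf hp hq)
  obtain ⟨A, hA⟩ := hbl.exists_boundary_eq_pair hfg
  set C := {v | Quot.mk (G.compRel S) v = Quot.mk (G.compRel S) p}
  have hfC : ∀ v ∈ G.ends f, v ∈ C := fun v hv => quotMk_eq_of_mem_ends hf hv hp
  have hgC : ∀ v ∈ G.ends g, v ∉ C := fun v hv hvC =>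
    hne (hvC.symm.trans (quotMk_eq_of_mem_ends hg hv hq))
  refine hf (hS.mem_of_mem_boundary hbl (A := A ∩ C) (mem_boundary_inter (by simp [hA]) hfC) ?_)
  intro e he
  have hC : G.boundary C ⊆ S := boundary_quotMk_preimage_subset S _
  rcases boundary_inter_subset A C he with heA | heC
  · rw [hA] at heA
    rcases heA with rfl | rfl
    · exact Or.inl rfl
    · exact absurd he (notMem_boundary_inter hgC)
  · exact Or.inr (hC heC)

end IsC1Set

end Multigraph

theorem stmt4_general {V E : Type} [Finite E] (G : Multigraph V E)
    (hbl : G.Bridgeless) (S T : Set E)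
    (hS : G.IsC1Set S) (hT : G.IsC1Set T) (hST : S ≠ T) :
    ∃! c : Quot (G.compRel S),
      ∀ f ∈ T, ∀ v : V, v ∈ G.ends f → Quot.mk (G.compRel S) v = c := by
  obtain ⟨e, he⟩ := hT.nonempty
  obtain ⟨u, w, hu⟩ := Multigraph.exists_ends_eq (G := G) e
  have hue : u ∈ G.ends e := hu ▸ Sym2.mem_mk_left u w
  have hTS : ∀ f ∈ T, f ∉ S := fun f hfT hfS => hST (hS.eq_of_mem hbl hT hfS hfT)
  refine ⟨Quot.mk _ u, fun f hf v hv => ?_, fun c hc => (hc e he u hue).symm⟩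
  exact hS.quotMk_eq_of_sameC1 hbl (hTS f hf) (hTS e he) (hT.sameC1 hbl hf he) hv hue

/-- Let Γ be a finite connected multigraph with no separating edges
(dual graph of a nodal curve free from separating nodes) and let S and T be two distinct
C1-sets. Then T is entirely contained in a unique connected component of Γ \ S. -/
theorem stmt4 {V E : Type} [Finite V] [Finite E] (G : Multigraph V E)
    (hconn : G.Connected) (hbl : G.Bridgeless) (S T : Set E)
    (hS : G.IsC1Set S) (hT : G.IsC1Set T) (hST : S ≠ T) :
    ∃! c : Quot (G.compRel S),
      ∀ f ∈ T, ∀ v : V, v ∈ G.ends f → Quot.mk (G.compRel S) v = c :=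
  stmt4_general G hbl S T hS hT hST
end

section
/- Let Γ be an oriented connected graph free from separating edges. Then the inclusion of the first homology H₁(Γ,ℤ) into the space of 1-chains C₁(Γ,ℤ) factors through the direct sum over all C1-sets S of H₁(Γ(S),ℤ), i.e. H₁(Γ,ℤ) ↪ ⊕_{S ∈ Set¹Γ} H₁(Γ(S),ℤ) ↪ C₁(Γ,ℤ), where each map is injective. -/
/-- A finite oriented multigraph: each edge has a source and a target vertex. -/
structure OrGraph (V E : Type) where
  src : E → V
  tgt : E → V

namespace OrGraph

variable {V E : Type} (G : OrGraph V E)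

def adjOn (F : Set E) (v w : V) : Prop :=
  ∃ e ∈ F, (G.src e = v ∧ G.tgt e = w) ∨ (G.src e = w ∧ G.tgt e = v)

def ConnectedOn (F : Set E) : Prop := ∀ v w : V, Relation.ReflTransGen (G.adjOn F) v w

def Connected : Prop := G.ConnectedOn Set.univ

def Bridgeless : Prop := ∀ e : E, G.ConnectedOn ({e} : Set E)ᶜ

def SameC1 (e f : E) : Prop := e = f ∨ ¬ G.ConnectedOn ({e, f} : Set E)ᶜ

def IsC1Set (S : Set E) : Prop := ∃ e : E, S = {f | G.SameC1 e f}

def compRel (S : Set E) (v w : V) : Prop :=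
  ∃ e ∉ S, (G.src e = v ∧ G.tgt e = w) ∨ (G.src e = w ∧ G.tgt e = v)

/-- The contraction Γ(S): contract all edges not in S; vertices are the connected
components of Γ \ S, edges are S, with the induced orientation. -/
def contract (S : Set E) : OrGraph (Quot (G.compRel S)) {e // e ∈ S} :=
  ⟨fun e => Quot.mk (G.compRel S) (G.src e.1), fun e => Quot.mk (G.compRel S) (G.tgt e.1)⟩

/-- The subgraph Γ \ S obtained by deleting the edges in S. -/
def delete (S : Set E) : OrGraph V {e // e ∉ S} :=
  ⟨fun e => G.src e.1, fun e => G.tgt e.1⟩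

/-- The boundary map ∂ : C₁(Γ,ℤ) → C₀(Γ,ℤ), sending an edge e to t(e) − s(e). -/
noncomputable def boundary : (E →₀ ℤ) →ₗ[ℤ] (V →₀ ℤ) :=
  Finsupp.lsum ℤ fun e => LinearMap.toSpanSingleton ℤ (V →₀ ℤ)
    (Finsupp.single (G.tgt e) 1 - Finsupp.single (G.src e) 1)

/-- H₁(Γ,ℤ), the kernel of the boundary map inside C₁(Γ,ℤ) = E →₀ ℤ. -/
noncomputable def H1 : Submodule ℤ (E →₀ ℤ) := LinearMap.ker G.boundary

end OrGraph

-- Pushforward on 1-chains under a contraction σ_S : Γ → Γ(S): an edge of S maps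
-- to itself, an edge not in S is contracted to 0.
open Classical in
noncomputable def projChain {E : Type} (S : Set E) : (E →₀ ℤ) →ₗ[ℤ] ({e // e ∈ S} →₀ ℤ) :=
  Finsupp.lsum ℤ fun e =>
    if h : e ∈ S then LinearMap.toSpanSingleton ℤ _ (Finsupp.single (⟨e, h⟩ : {e // e ∈ S}) 1)
    else 0

/-- The map on 1-chains induced by an inclusion of edge sets: each edge goes to itself. -/
noncomputable def inclChain {E : Type} (S : Set E) : ({e // e ∈ S} →₀ ℤ) →ₗ[ℤ] (E →₀ ℤ) :=
  Finsupp.lmapDomain ℤ ℤ (Subtype.val : {e // e ∈ S} → E)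

/-!
Two edges `e ≠ f` lie in the same C1-set exactly when some vertex set `X` is crossed by no edge
other than `e` and `f`; in a bridgeless graph such an `X` is then crossed by both. Crossing sets
add under symmetric difference of vertex sets, so cuts for `{e, f}` and `{f, g}` combine into a
cut for `{e, g}`: being in the same C1-set is transitive and the C1-sets partition the edges.
Hence restricting a cycle to each C1-set (a cycle of the contraction, since contracted edges
have boundary zero) and re-including the pieces gives back the cycle, so both maps are injective.
-/

section Chains

open DirectSum Function

variable {E : Type}

theorem projChain_apply (S : Set E) (x : E →₀ ℤ) (e : S) : projChain S x e = x e := by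
  induction x using Finsupp.induction_linear with
  | zero => simp
  | add x y hx hy => simp [hx, hy]
  | single a n =>
    by_cases ha : a ∈ S
    · simp only [projChain, ha, Finsupp.lsum_single, dite_true, LinearMap.toSpanSingleton_apply,
        Finsupp.smul_single, smul_eq_mul, mul_one]
      exact (Finsupp.single_apply_left Subtype.val_injective ⟨a, ha⟩ e n).symm
    · have : a ≠ e := fun h => ha (h ▸ e.2)
      simp [projChain, ha, this]

theorem inclChain_apply_of_mem (S : Set E) (y : S →₀ ℤ) (e : S) : inclChain S y e = y e :=
  Finsupp.mapDomain_apply Subtype.val_injective y e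

theorem inclChain_apply_of_notMem (S : Set E) (y : S →₀ ℤ) {e : E} (he : e ∉ S) :
    inclChain S y e = 0 :=
  Finsupp.mapDomain_of_notMem_range _ _ (by simpa using he)

variable {ι : Type} (S : ι → Set E) (M : ∀ i, Submodule ℤ (S i →₀ ℤ))

noncomputable def sumProjChain [Fintype ι] (N : Submodule ℤ (E →₀ ℤ))
    (hN : ∀ i, ∀ x ∈ N, projChain (S i) x ∈ M i) : N →ₗ[ℤ] ⨁ i, M i :=
  (linearEquivFunOnFintype ℤ ι fun i => M i).symm.toLinearMap ∘ₗ
    LinearMap.pi fun i => (projChain (S i) ∘ₗ N.subtype).codRestrict (M i) fun x => hN i x x.2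

theorem sumProjChain_apply [Fintype ι] (N : Submodule ℤ (E →₀ ℤ))
    (hN : ∀ i, ∀ x ∈ N, projChain (S i) x ∈ M i) (x : N) (i : ι) :
    (sumProjChain S M N hN x i : S i →₀ ℤ) = projChain (S i) x :=
  rfl

variable [DecidableEq ι]

noncomputable def sumInclChain : (⨁ i, M i) →ₗ[ℤ] (E →₀ ℤ) :=
  toModule ℤ ι _ fun i => inclChain (S i) ∘ₗ (M i).subtype

theorem sumInclChain_of (i : ι) (y : M i) :
    sumInclChain S M (of (fun i => M i) i y) = inclChain (S i) y := by
  rw [← lof_eq_of ℤ]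
  exact toModule_lof ℤ (M := fun i => M i) i y

variable {S} (hS : Pairwise (Disjoint on S))
include hS

theorem sumInclChain_apply (y : ⨁ i, M i) (i : ι) (e : S i) :
    sumInclChain S M y e = (y i : S i →₀ ℤ) e := by
  induction y using DirectSum.induction_on with
  | zero => simp
  | add y z hy hz => simp [hy, hz]
  | of j z =>
    rw [sumInclChain_of]
    by_cases hji : j = i
    · subst hji
      simp [inclChain_apply_of_mem]
    · rw [of_eq_of_ne _ _ _ (Ne.symm hji),
        inclChain_apply_of_notMem _ _ ((hS hji).notMem_of_mem_right e.2)]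
      simp

theorem sumInclChain_injective : Injective (sumInclChain S M) := by
  intro y z hyz
  ext i e
  simpa [sumInclChain_apply M hS] using congr($hyz e)

theorem sumInclChain_sumProjChain [Fintype ι] (hcover : ∀ e, ∃ i, e ∈ S i)
    (N : Submodule ℤ (E →₀ ℤ)) (hN : ∀ i, ∀ x ∈ N, projChain (S i) x ∈ M i) (x : N) :
    sumInclChain S M (sumProjChain S M N hN x) = x := by
  ext e
  obtain ⟨i, he⟩ := hcover e
  rw [sumInclChain_apply M hS _ i ⟨e, he⟩, sumProjChain_apply, projChain_apply]

end Chains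

namespace OrGraph

variable {V E : Type} (G : OrGraph V E)

theorem contract_boundary_comp_projChain (S : Set E) :
    (G.contract S).boundary ∘ₗ projChain S
      = Finsupp.lmapDomain ℤ ℤ (Quot.mk (G.compRel S)) ∘ₗ G.boundary := by
  apply Finsupp.lhom_ext
  intro a n
  by_cases h : a ∈ S
  · simp [projChain, boundary, h, contract, map_sub, smul_sub]
  · have hq : Quot.mk (G.compRel S) (G.src a) = Quot.mk (G.compRel S) (G.tgt a) :=
      Quot.sound ⟨a, h, Or.inl ⟨rfl, rfl⟩⟩
    simp [projChain, boundary, h, map_sub, hq]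

theorem projChain_mem_H1 (S : Set E) {x : E →₀ ℤ}
    (hx : x ∈ G.H1) : projChain S x ∈ (G.contract S).H1 := by
  rw [H1, LinearMap.mem_ker] at hx ⊢
  simpa [hx] using LinearMap.congr_fun (G.contract_boundary_comp_projChain S) x

def Crosses (X : Set V) (e : E) : Prop := Xor (G.src e ∈ X) (G.tgt e ∈ X)

variable {G}

theorem Crosses.nonempty {X : Set V} {e : E} (h : G.Crosses X e) :
    X.Nonempty ∧ Xᶜ.Nonempty := by
  rcases h with ⟨hs, ht⟩ | ⟨ht, hs⟩
  exacts [⟨⟨_, hs⟩, ⟨_, ht⟩⟩, ⟨⟨_, ht⟩, ⟨_, hs⟩⟩]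

theorem crosses_symmDiff {X Y : Set V} {e : E} :
    G.Crosses (symmDiff X Y) e ↔ Xor (G.Crosses X e) (G.Crosses Y e) := by
  simp only [Crosses, Set.mem_symmDiff, Xor]
  tauto

theorem mem_of_reflTransGen_adjOn {F : Set E} {X : Set V} (hX : ∀ e ∈ F, ¬ G.Crosses X e)
    {v w : V} (hvw : Relation.ReflTransGen (G.adjOn F) v w) (hv : v ∈ X) : w ∈ X := by
  induction hvw with
  | refl => exact hv
  | tail _ hadj ih =>
    obtain ⟨e, he, ⟨rfl, rfl⟩ | ⟨rfl, rfl⟩⟩ := hadj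
    all_goals
      by_contra h
      exact hX e he (by simp only [Crosses, Xor]; tauto)

theorem not_connectedOn_iff {F : Set E} :
    ¬ G.ConnectedOn F ↔
      ∃ X : Set V, X.Nonempty ∧ Xᶜ.Nonempty ∧ ∀ e, G.Crosses X e → e ∉ F := by
  constructor
  · intro h
    obtain ⟨v, w, hvw⟩ : ∃ v w, ¬ Relation.ReflTransGen (G.adjOn F) v w := by
      simpa [ConnectedOn] using h
    refine ⟨{u | Relation.ReflTransGen (G.adjOn F) v u}, ⟨v, .refl⟩, ⟨w, hvw⟩, ?_⟩
    rintro e (⟨hs, ht⟩ | ⟨ht, hs⟩) he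
    · exact ht (hs.tail ⟨e, he, Or.inl ⟨rfl, rfl⟩⟩)
    · exact hs (ht.tail ⟨e, he, Or.inr ⟨rfl, rfl⟩⟩)
  · rintro ⟨X, ⟨v, hv⟩, ⟨w, hw⟩, hX⟩ hconn
    exact hw (mem_of_reflTransGen_adjOn (fun e he hc => hX e hc he) (hconn v w) hv)

theorem not_connectedOn_compl_pair_iff {e f : E} :
    ¬ G.ConnectedOn ({e, f} : Set E)ᶜ ↔
      ∃ X : Set V, X.Nonempty ∧ Xᶜ.Nonempty ∧ ∀ d, G.Crosses X d → d = e ∨ d = f := by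
  simp [not_connectedOn_iff, or_iff_not_imp_left]

theorem Bridgeless.ne_of_not_connectedOn_compl_pair (hbl : G.Bridgeless) {e f : E}
    (h : ¬ G.ConnectedOn ({e, f} : Set E)ᶜ) : e ≠ f := by
  rintro rfl
  exact h (by simpa using hbl e)

theorem Bridgeless.crosses_of_cut (hbl : G.Bridgeless) {X : Set V} {e f : E}
    (hX : X.Nonempty) (hXc : Xᶜ.Nonempty) (hcut : ∀ d, G.Crosses X d → d = e ∨ d = f) :
    G.Crosses X e := by
  by_contra he
  refine not_connectedOn_iff.mpr ⟨X, hX, hXc, fun d hd hdf => he ?_⟩ (hbl f)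
  obtain rfl := (hcut d hd).resolve_right hdf
  exact hd

theorem sameC1_symm {e f : E} (h : G.SameC1 e f) : G.SameC1 f e :=
  h.imp Eq.symm fun h => by rwa [Set.pair_comm]

theorem Bridgeless.sameC1_trans (hbl : G.Bridgeless) {e f g : E}
    (hef : G.SameC1 e f) (hfg : G.SameC1 f g) : G.SameC1 e g := by
  rcases hef with rfl | hef
  · exact hfg
  rcases hfg with rfl | hfg
  · exact Or.inr hef
  by_cases heg : e = g
  · exact Or.inl heg
  obtain ⟨X, hX, hXc, hXcut⟩ := not_connectedOn_compl_pair_iff.mp hef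
  obtain ⟨Y, hY, hYc, hYcut⟩ := not_connectedOn_compl_pair_iff.mp hfg
  have hXe := hbl.crosses_of_cut hX hXc hXcut
  have hXf := hbl.crosses_of_cut hX hXc fun d hd => (hXcut d hd).symm
  have hYf := hbl.crosses_of_cut hY hYc hYcut
  have hYe : ¬ G.Crosses Y e := fun h =>
    (hYcut e h).elim (hbl.ne_of_not_connectedOn_compl_pair hef) heg
  have hZe : G.Crosses (symmDiff X Y) e := crosses_symmDiff.mpr (Or.inl ⟨hXe, hYe⟩)
  refine Or.inr (not_connectedOn_compl_pair_iff.mpr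
    ⟨symmDiff X Y, hZe.nonempty.1, hZe.nonempty.2, fun d hd => ?_⟩)
  rcases crosses_symmDiff.mp hd with ⟨hXd, hYd⟩ | ⟨hYd, hXd⟩
  · exact Or.inl ((hXcut d hXd).resolve_right (by rintro rfl; exact hYd hYf))
  · exact Or.inr ((hYcut d hYd).resolve_left (by rintro rfl; exact hXd hXf))

theorem Bridgeless.eq_setOf_sameC1 (hbl : G.Bridgeless) {S : Set E} (hS : G.IsC1Set S)
    {e : E} (he : e ∈ S) : S = {f | G.SameC1 e f} := by
  obtain ⟨a, rfl⟩ := hS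
  ext f
  exact ⟨hbl.sameC1_trans (sameC1_symm he), hbl.sameC1_trans he⟩

theorem Bridgeless.pairwise_disjoint_c1Sets (hbl : G.Bridgeless) :
    Pairwise (Function.onFun Disjoint fun S : {S : Set E // G.IsC1Set S} => S.1) := by
  rintro ⟨S, hS⟩ ⟨T, hT⟩ hST
  refine Set.disjoint_left.mpr fun e heS heT => hST (Subtype.ext ?_)
  exact (hbl.eq_setOf_sameC1 hS heS).trans (hbl.eq_setOf_sameC1 hT heT).symm

theorem exists_c1Set_mem (e : E) : ∃ S : {S : Set E // G.IsC1Set S}, e ∈ S.1 :=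
  ⟨⟨_, e, rfl⟩, Or.inl rfl⟩

end OrGraph

theorem stmt5_general {V E : Type} [Finite E] (G : OrGraph V E)
    [DecidableEq {S : Set E // G.IsC1Set S}]
    (hbl : G.Bridgeless) :
    ∃ α : ↥G.H1 →ₗ[ℤ] DirectSum {S : Set E // G.IsC1Set S}
        (fun S => ↥(G.contract S.1).H1),
      ∃ β : DirectSum {S : Set E // G.IsC1Set S}
          (fun S => ↥(G.contract S.1).H1) →ₗ[ℤ] (E →₀ ℤ),
        Function.Injective α ∧ Function.Injective β ∧
        (∀ (x : ↥G.H1) (S : {S : Set E // G.IsC1Set S}),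
          ((α x) S : {e // e ∈ S.1} →₀ ℤ) = projChain S.1 x.1) ∧
        (∀ (S : {S : Set E // G.IsC1Set S}) (y : ↥(G.contract S.1).H1),
          β (DirectSum.of (fun S => ↥(G.contract S.1).H1) S y) = inclChain S.1 y.1) ∧
        (∀ x : ↥G.H1, β (α x) = x.1) := by
  have := Fintype.ofFinite {S : Set E // G.IsC1Set S}
  let C1 : {S : Set E // G.IsC1Set S} → Set E := Subtype.val
  let α := sumProjChain C1 (fun S => (G.contract S).H1) G.H1
    fun S _ hx => G.projChain_mem_H1 S hx
  let β := sumInclChain C1 fun S => (G.contract S).H1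
  have hβα : ∀ x, β (α x) = x :=
    sumInclChain_sumProjChain _ hbl.pairwise_disjoint_c1Sets OrGraph.exists_c1Set_mem _ _
  refine ⟨α, β, fun x y h => Subtype.ext ?_,
    sumInclChain_injective _ hbl.pairwise_disjoint_c1Sets,
    sumProjChain_apply _ _ _ _, sumInclChain_of _ _, hβα⟩
  rw [← hβα x, ← hβα y, h]

/-- Let Γ be a finite oriented connected graph free from separating edges.
Then the inclusion H₁(Γ,ℤ) ⊆ C₁(Γ,ℤ) factors as an injection
H₁(Γ,ℤ) ↪ ⊕_{S ∈ Set¹Γ} H₁(Γ(S),ℤ) followed by an injection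
⊕_{S ∈ Set¹Γ} H₁(Γ(S),ℤ) ↪ C₁(Γ,ℤ); the first map is the direct sum of the pushforwards
under the contractions σ_S, and the second sends each edge of Γ(S) (an element of S) to
itself. -/
theorem stmt5 {V E : Type} [Finite V] [Finite E] (G : OrGraph V E)
    [DecidableEq {S : Set E // G.IsC1Set S}]
    (hconn : G.Connected) (hbl : G.Bridgeless) :
    ∃ α : ↥G.H1 →ₗ[ℤ] DirectSum {S : Set E // G.IsC1Set S}
        (fun S => ↥(G.contract S.1).H1),
      ∃ β : DirectSum {S : Set E // G.IsC1Set S}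
          (fun S => ↥(G.contract S.1).H1) →ₗ[ℤ] (E →₀ ℤ),
        Function.Injective α ∧ Function.Injective β ∧
        (∀ (x : ↥G.H1) (S : {S : Set E // G.IsC1Set S}),
          ((α x) S : {e // e ∈ S.1} →₀ ℤ) = projChain S.1 x.1) ∧
        (∀ (S : {S : Set E // G.IsC1Set S}) (y : ↥(G.contract S.1).H1),
          β (DirectSum.of (fun S => ↥(G.contract S.1).H1) S y) = inclChain S.1 y.1) ∧
        (∀ x : ↥G.H1, β (α x) = x.1) :=
  stmt5_general G hbl
end

section
/- If Γ and Γ' are cyclically equivalent connected graphs free from separating edges, then Γ is 3-edge-connected if and only if Γ' is 3-edge-connected. -/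
/-- A set of edges is a cycle of the graph if it is the edge-support of a closed trail. -/
def Multigraph.IsCycle {V E : Type} (G : Multigraph V E) (C : Set E) : Prop :=
  ∃ t : G.ClosedTrail, C = Set.range t.edge

/-- Cyclic equivalence (two-isomorphism): a bijection of the edge sets inducing a
bijection between the cycles of the two graphs. -/
def CycEquiv {V E V' E' : Type} (G : Multigraph V E) (G' : Multigraph V' E') : Prop :=
  ∃ ε : E ≃ E', ∀ C : Set E, G.IsCycle C ↔ G'.IsCycle (ε '' C)

/-- A connected multigraph is 3-edge-connected if it remains connected after removing any
two of its edges. -/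
def Multigraph.ThreeEdgeConnected {V E : Type} (G : Multigraph V E) : Prop :=
  ∀ e f : E, e ≠ f → G.ConnectedOn ({e, f} : Set E)ᶜ

/-! A bridgeless graph splits after deleting two distinct edges `e`, `f` exactly when no cycle
contains `e` but not `f`: such a cycle lets every path of `Γ - f` be rerouted around `e`, and
conversely a path joining the ends of `e` in `Γ - {e, f}` closes up with `e` into such a cycle.
So 3-edge-connectedness is read off the cycles alone and is invariant under cyclic
equivalence. -/

namespace Multigraph

variable {V E : Type} {G : Multigraph V E}

instance inst_s9 (F : Set E) : Std.Symm (G.adjOn F) :=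
  ⟨fun _ _ ⟨g, hg, hends⟩ => ⟨g, hg, hends.trans Sym2.eq_swap⟩⟩

/-- A trail indexed by `ℕ`; only the values below `len` (for edges) and up to `len` (for
vertices) matter. -/
structure Trail (G : Multigraph V E) (a b : V) where
  len : ℕ
  vert : ℕ → V
  edge : ℕ → E
  vert_zero : vert 0 = a
  vert_len : vert len = b
  ends_edge : ∀ k < len, G.ends (edge k) = s(vert k, vert (k + 1))
  injOn_edge : Set.InjOn edge (Set.Iio len)

namespace Trail

variable {a b c : V}

def edges (T : G.Trail a b) : Set E := T.edge '' Set.Iio T.len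

noncomputable def nil [Nonempty E] (a : V) : G.Trail a a :=
  ⟨0, fun _ => a, fun _ => Classical.arbitrary E, rfl, rfl, by simp, by simp⟩

def cons (g : E) (hg : G.ends g = s(a, c)) (T : G.Trail c b) (hgT : g ∉ T.edges) :
    G.Trail a b where
  len := T.len + 1
  vert := fun | 0 => a | k + 1 => T.vert k
  edge := fun | 0 => g | k + 1 => T.edge k
  vert_zero := rfl
  vert_len := T.vert_len
  ends_edge := by
    rintro (_ | k) hk
    · simpa [T.vert_zero] using hg
    · exact T.ends_edge k (by omega)
  injOn_edge := by
    rintro (_ | k) hk (_ | l) hl hkl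
    · rfl
    · exact absurd ⟨l, by simp at hl ⊢; omega, hkl.symm⟩ hgT
    · exact absurd ⟨k, by simp at hk ⊢; omega, hkl⟩ hgT
    · simp only [Set.mem_Iio] at hk hl
      exact congrArg (· + 1) (T.injOn_edge (by simp; omega) (by simp; omega) hkl)

theorem edges_cons (g : E) (hg : G.ends g = s(a, c)) (T : G.Trail c b) (hgT : g ∉ T.edges) :
    (T.cons g hg hgT).edges = insert g T.edges := by
  ext x
  simp only [edges, cons, Set.mem_image, Set.mem_Iio, Set.mem_insert_iff]
  constructor
  · rintro ⟨_ | k, hk, rfl⟩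
    · exact Or.inl rfl
    · exact Or.inr ⟨k, by omega, rfl⟩
  · rintro (rfl | ⟨k, hk, rfl⟩)
    · exact ⟨0, by omega, rfl⟩
    · exact ⟨k + 1, by omega, rfl⟩

def drop (T : G.Trail a b) (j : ℕ) (hj : j ≤ T.len) : G.Trail (T.vert j) b where
  len := T.len - j
  vert k := T.vert (j + k)
  edge k := T.edge (j + k)
  vert_zero := rfl
  vert_len := by rw [Nat.add_sub_cancel' hj, T.vert_len]
  ends_edge k hk := T.ends_edge (j + k) (by omega)
  injOn_edge k hk l hl hkl := by
    simp only [Set.mem_Iio] at hk hl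
    have := T.injOn_edge (by simp; omega) (by simp; omega) hkl
    omega

theorem edges_drop_subset (T : G.Trail a b) (j : ℕ) (hj : j ≤ T.len) :
    (T.drop j hj).edges ⊆ T.edges := by
  rintro _ ⟨k, hk, rfl⟩
  exact ⟨j + k, by simp [drop] at hk ⊢; omega, rfl⟩

theorem mem_ends_edge (T : G.Trail a b) {k : ℕ} (hk : k < T.len) {v : V}
    (hv : v ∈ G.ends (T.edge k)) : ∃ j ≤ T.len, T.vert j = v := by
  rw [T.ends_edge k hk, Sym2.mem_iff] at hv
  rcases hv with rfl | rfl
  exacts [⟨k, hk.le, rfl⟩, ⟨k + 1, hk, rfl⟩]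

end Trail

/-- A step `a — c` in front of a trail from `c` either creates no repeated edge, or `a` already
lies on the trail and we shortcut to it. -/
theorem exists_trail [Nonempty E] {F : Set E} {a b : V}
    (h : Relation.ReflTransGen (G.adjOn F) a b) : ∃ T : G.Trail a b, T.edges ⊆ F := by
  induction h using Relation.ReflTransGen.head_induction_on with
  | refl => exact ⟨Trail.nil b, by rintro _ ⟨k, hk, -⟩; simp [Trail.nil] at hk⟩
  | @head a c hstep _ ih =>
    obtain ⟨T, hTF⟩ := ih
    obtain ⟨g, hgF, hg⟩ := hstep
    by_cases hon : ∃ j ≤ T.len, T.vert j = a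
    · obtain ⟨j, hj, rfl⟩ := hon
      exact ⟨T.drop j hj, (T.edges_drop_subset j hj).trans hTF⟩
    · have hgT : g ∉ T.edges := by
        rintro ⟨k, hk, rfl⟩
        exact hon (T.mem_ends_edge hk (by rw [hg]; exact Sym2.mem_mk_left a c))
      refine ⟨T.cons g hg hgT, ?_⟩
      rw [Trail.edges_cons]
      exact Set.insert_subset hgF hTF

def Trail.toClosedTrail {a : V} (T : G.Trail a a) (hlen : 0 < T.len) : G.ClosedTrail where
  n := T.len
  npos := hlen
  vert i := T.vert i
  edge i := T.edge i
  closed := by simp [T.vert_len, T.vert_zero]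
  compat i := T.ends_edge i i.2
  inj i j hij := Fin.ext (T.injOn_edge i.2 j.2 hij)

theorem Trail.isCycle_edges {a : V} (T : G.Trail a a) (hlen : 0 < T.len) :
    G.IsCycle T.edges := by
  refine ⟨T.toClosedTrail hlen, ?_⟩
  ext x
  simp [edges, toClosedTrail, Fin.exists_iff]

theorem exists_isCycle_mem_not_mem {e f : E} (hef : e ≠ f)
    (hcon : G.ConnectedOn ({e, f} : Set E)ᶜ) : ∃ C, G.IsCycle C ∧ e ∈ C ∧ f ∉ C := by
  have : Nonempty E := ⟨e⟩
  obtain ⟨⟨u, v⟩, huv⟩ := Quot.exists_rep (G.ends e)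
  obtain ⟨T, hTF⟩ := exists_trail (hcon v u)
  have heT : e ∉ T.edges := fun he => hTF he (by simp)
  refine ⟨_, (T.cons e huv.symm heT).isCycle_edges (Nat.succ_pos _), ?_⟩
  rw [Trail.edges_cons]
  exact ⟨Set.mem_insert e _, fun hf => (Set.mem_insert_iff.1 hf).elim (hef ·.symm)
    (fun hf => hTF hf (by simp))⟩

namespace ClosedTrail

variable (t : G.ClosedTrail)

def vertMod (k : ℕ) : V := t.vert ⟨k % t.n, by have := Nat.mod_lt k t.npos; omega⟩

def edgeMod (k : ℕ) : E := t.edge ⟨k % t.n, Nat.mod_lt k t.npos⟩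

theorem ends_edgeMod (k : ℕ) : G.ends (t.edgeMod k) = s(t.vertMod k, t.vertMod (k + 1)) := by
  have hk := Nat.mod_lt k t.npos
  have hmod := Nat.mod_add_mod k t.n 1
  rw [edgeMod, t.compat]
  congr 1
  rcases (show k % t.n + 1 ≤ t.n from hk).eq_or_lt with hwrap | hlt
  · rw [hwrap, Nat.mod_self] at hmod
    calc t.vert _ = t.vert (Fin.last t.n) := congrArg t.vert (Fin.ext hwrap)
      _ = t.vert 0 := t.closed
      _ = t.vertMod (k + 1) := congrArg t.vert (Fin.ext hmod)
  · simp only [vertMod, ← hmod, Nat.mod_eq_of_lt hlt]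
    rfl

/-- Going once around the trail from the far end of the `i`-th edge back to its near end uses
every edge except the `i`-th one. -/
theorem reflTransGen_around {F : Set E} (i : ℕ)
    (hF : ∀ k, k % t.n ≠ i % t.n → t.edgeMod k ∈ F) :
    Relation.ReflTransGen (G.adjOn F) (t.vertMod (i + 1)) (t.vertMod i) := by
  have hback : t.vertMod (i + t.n) = t.vertMod i := by simp [vertMod]
  rw [← hback]
  refine (reflTransGen_of_succ_of_le (fun j l => G.adjOn F (t.vertMod j) (t.vertMod l))
    (fun k hk => ⟨t.edgeMod k, hF k ?_, t.ends_edgeMod k⟩) (n := i + 1) (m := i + t.n)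
    (by have := t.npos; omega)).lift t.vertMod fun _ _ h => h
  obtain ⟨d, rfl⟩ := Nat.exists_eq_add_of_le (Set.mem_Ico.1 hk).1
  intro hmod
  have hd : d + 1 ≡ 0 [MOD t.n] := by
    refine Nat.ModEq.add_left_cancel' i ?_
    rwa [Nat.add_zero, ← Nat.add_assoc, Nat.add_right_comm]
  have := (Set.mem_Ico.1 hk).2
  rw [Nat.ModEq, Nat.zero_mod, Nat.mod_eq_of_lt (by omega)] at hd
  omega

end ClosedTrail

theorem connectedOn_compl_pair_of_isCycle {e f : E} (hf : G.ConnectedOn ({f} : Set E)ᶜ)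
    {C : Set E} (hC : G.IsCycle C) (heC : e ∈ C) (hfC : f ∉ C) :
    G.ConnectedOn ({e, f} : Set E)ᶜ := by
  obtain ⟨t, rfl⟩ := hC
  obtain ⟨i, rfl⟩ := heC
  have hi : t.edgeMod i = t.edge i := by simp [ClosedTrail.edgeMod, Nat.mod_eq_of_lt i.2]
  have hdetour := t.reflTransGen_around (F := ({t.edge i, f} : Set E)ᶜ) i fun k hk => by
    simp only [Set.mem_compl_iff, Set.mem_insert_iff, Set.mem_singleton_iff, not_or]
    exact ⟨fun h => hk (congrArg Fin.val (t.inj (h.trans hi.symm))), fun h => hfC ⟨_, h⟩⟩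
  intro v w
  refine Relation.reflTransGen_closed (fun x y hxy => ?_) v w (hf v w)
  obtain ⟨g, hg, hends⟩ := hxy
  by_cases hgi : g = t.edge i
  · rw [hgi, ← hi, t.ends_edgeMod] at hends
    rcases Sym2.eq_iff.1 hends with ⟨rfl, rfl⟩ | ⟨rfl, rfl⟩
    exacts [symm hdetour, hdetour]
  · refine .single ⟨g, ?_, hends⟩
    simp only [Set.mem_compl_iff, Set.mem_insert_iff, Set.mem_singleton_iff, not_or] at hg ⊢
    exact ⟨hgi, hg⟩

def CyclesSeparateEdges (G : Multigraph V E) : Prop :=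
  ∀ e f : E, e ≠ f → ∃ C, G.IsCycle C ∧ e ∈ C ∧ f ∉ C

theorem threeEdgeConnected_iff_cyclesSeparateEdges (hbl : G.Bridgeless) :
    G.ThreeEdgeConnected ↔ G.CyclesSeparateEdges :=
  ⟨fun h e f hef => exists_isCycle_mem_not_mem hef (h e f hef),
    fun h e f hef =>
      let ⟨_, hC, heC, hfC⟩ := h e f hef
      connectedOn_compl_pair_of_isCycle (hbl f) hC heC hfC⟩

end Multigraph

namespace CycEquiv

variable {V E V' E' : Type} {G : Multigraph V E} {G' : Multigraph V' E'}

theorem symm (h : CycEquiv G G') : CycEquiv G' G := by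
  obtain ⟨ε, hε⟩ := h
  refine ⟨ε.symm, fun C' => ?_⟩
  rw [hε, Equiv.image_symm_image]

theorem cyclesSeparateEdges (h : CycEquiv G G') (hG : G.CyclesSeparateEdges) :
    G'.CyclesSeparateEdges := by
  obtain ⟨ε, hε⟩ := h
  intro e' f' hef
  obtain ⟨C, hC, heC, hfC⟩ := hG (ε.symm e') (ε.symm f') (ε.symm.injective.ne hef)
  refine ⟨ε '' C, (hε C).1 hC, ⟨_, heC, ε.apply_symm_apply e'⟩, ?_⟩
  rwa [Equiv.image_eq_preimage_symm ε, Set.mem_preimage]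

end CycEquiv

theorem stmt9_general {V E V' E' : Type}
    (G : Multigraph V E) (G' : Multigraph V' E')
    (hbl : G.Bridgeless)
    (hbl' : G'.Bridgeless)
    (h : CycEquiv G G') :
    G.ThreeEdgeConnected ↔ G'.ThreeEdgeConnected := by
  rw [G.threeEdgeConnected_iff_cyclesSeparateEdges hbl,
    G'.threeEdgeConnected_iff_cyclesSeparateEdges hbl']
  exact ⟨h.cyclesSeparateEdges, h.symm.cyclesSeparateEdges⟩

/-- If Γ and Γ' are cyclically equivalent finite connected multigraphs
free from separating edges, then Γ is 3-edge-connected if and only if Γ' is. -/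
theorem stmt9 {V E V' E' : Type} [Finite V] [Finite E] [Finite V'] [Finite E']
    (G : Multigraph V E) (G' : Multigraph V' E')
    (hconn : G.Connected) (hbl : G.Bridgeless)
    (hconn' : G'.Connected) (hbl' : G'.Bridgeless)
    (h : CycEquiv G G') :
    G.ThreeEdgeConnected ↔ G'.ThreeEdgeConnected :=
  stmt9_general G G' hbl hbl' h
end

section
/- Let Γ be a connected graph with no separating edges, and consider the poset SP_Γ of all subsets S ⊆ E(Γ) such that Γ \ S has no separating edges, ordered by reverse inclusion. Then for S in SP_Γ, the codimension function codim(S) := b₁(Γ(S)) (first Betti number of the contraction of all edges not in S) is strictly order-reversing: if S > T in SP_Γ (meaning S ⊊ T as sets), then codim(S) < codim(T). -/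
/-- The graph has no bridges among the edge set F: deleting any single edge of F does not
disconnect any connected component of the subgraph with edge set F. -/
def Multigraph.NoBridgesOn {V E : Type} (G : Multigraph V E) (F : Set E) : Prop :=
  ∀ e ∈ F, ∀ v w : V, Relation.ReflTransGen (G.adjOn F) v w →
    Relation.ReflTransGen (G.adjOn (F \ {e})) v w


open Relation Set

namespace Multigraph

variable {V E : Type} (G : Multigraph V E)

lemma adjOn_symm (F : Set E) : Symmetric (G.adjOn F) := by
  rintro a b ⟨e, he, h⟩
  exact ⟨e, he, h.trans Sym2.eq_swap⟩

lemma adjOn_mono {F F' : Set E} (h : F ⊆ F') {a b : V} (hab : G.adjOn F a b) :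
    G.adjOn F' a b := by
  obtain ⟨e, he, h'⟩ := hab; exact ⟨e, h he, h'⟩

lemma eqvGen_iff_rtg {α : Type*} {r : α → α → Prop} (hs : Symmetric r) {a b : α} :
    Relation.EqvGen r a b ↔ ReflTransGen r a b := by
  constructor
  · intro h
    induction h with
    | rel a b h => exact ReflTransGen.single h
    | refl => exact ReflTransGen.refl
    | symm a b _ ih => exact (@ReflTransGen.stdSymm _ _ ⟨hs⟩).symm _ _ ih
    | trans a b c _ _ ih1 ih2 => exact ih1.trans ih2
  · intro h
    induction h with
    | refl => exact EqvGen.refl _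
    | tail _ h2 ih => exact ih.trans _ _ _ (EqvGen.rel _ _ h2)

/-- number of components of the subgraph with edge set F -/
noncomputable def ccount (F : Set E) : ℕ := Nat.card (Quot (G.adjOn F))

lemma ccount_congr {r s : V → V → Prop}
    (h : ∀ a b, Relation.EqvGen r a b ↔ Relation.EqvGen s a b) :
    Nat.card (Quot r) = Nat.card (Quot s) := by
  apply Nat.card_congr
  refine ⟨Quot.lift (Quot.mk s) ?_, Quot.lift (Quot.mk r) ?_, ?_, ?_⟩
  · intro a b hab
    exact Quot.eqvGen_sound ((h a b).mp (EqvGen.rel _ _ hab))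
  · intro a b hab
    exact Quot.eqvGen_sound ((h a b).mpr (EqvGen.rel _ _ hab))
  · intro x; induction x using Quot.ind; rfl
  · intro x; induction x using Quot.ind; rfl

/-- key combinatorial lemma about EqvGen of an inserted edge -/
lemma eqvGen_insert {F : Set E} {e : E} {v w : V} (hvw : G.ends e = s(v, w)) {a b : V}
    (h : Relation.EqvGen (G.adjOn (insert e F)) a b) :
    Relation.EqvGen (G.adjOn F) a b ∨
      ((Relation.EqvGen (G.adjOn F) a v ∨ Relation.EqvGen (G.adjOn F) a w) ∧
       (Relation.EqvGen (G.adjOn F) b v ∨ Relation.EqvGen (G.adjOn F) b w)) := by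
  induction h with
  | rel a b hab =>
    obtain ⟨f, hf, hends⟩ := hab
    rcases Set.mem_insert_iff.mp hf with hfe | hfF
    · subst hfe
      have : s(v, w) = s(a, b) := hvw.symm.trans hends
      rcases Sym2.eq_iff.mp this with ⟨h1, h2⟩ | ⟨h1, h2⟩
      · subst h1; subst h2
        exact Or.inr ⟨Or.inl (EqvGen.refl _), Or.inr (EqvGen.refl _)⟩
      · subst h1; subst h2
        exact Or.inr ⟨Or.inr (EqvGen.refl _), Or.inl (EqvGen.refl _)⟩
    · exact Or.inl (EqvGen.rel _ _ ⟨f, hfF, hends⟩)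
  | refl a => exact Or.inl (EqvGen.refl _)
  | symm a b _ ih =>
    rcases ih with h | ⟨h1, h2⟩
    · exact Or.inl (h.symm _ _)
    · exact Or.inr ⟨h2, h1⟩
  | trans a b c _ _ ih1 ih2 =>
    rcases ih1 with h1 | ⟨h1a, h1b⟩
    · rcases ih2 with h2 | ⟨h2b, h2c⟩
      · exact Or.inl (h1.trans _ _ _ h2)
      · refine Or.inr ⟨?_, h2c⟩
        rcases h2b with hb | hb
        · exact Or.inl (h1.trans _ _ _ hb)
        · exact Or.inr (h1.trans _ _ _ hb)
    · rcases ih2 with h2 | ⟨h2b, h2c⟩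
      · refine Or.inr ⟨h1a, ?_⟩
        rcases h1b with hb | hb
        · exact Or.inl ((h2.symm _ _).trans _ _ _ hb)
        · exact Or.inr ((h2.symm _ _).trans _ _ _ hb)
      · exact Or.inr ⟨h1a, h2c⟩

/-- adding one edge decreases the number of components by at most one -/
lemma ccount_le_insert [Finite V] (F : Set E) (e : E) :
    G.ccount F ≤ G.ccount (insert e F) + 1 := by
  classical
  obtain ⟨v, w, hvw⟩ : ∃ v w : V, G.ends e = s(v, w) :=
    Sym2.exists.mp ⟨G.ends e, rfl⟩
  set r := G.adjOn F with hr
  set r' := G.adjOn (insert e F) with hr'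
  let φ : Quot r → Quot r' := Quot.map id (fun a b hab => G.adjOn_mono (Set.subset_insert e F) hab)
  let ψ : Quot r → Quot r' ⊕ Unit := fun x =>
    if x = Quot.mk r v then Sum.inr () else Sum.inl (φ x)
  have hφ : ∀ x : V, φ (Quot.mk r x) = Quot.mk r' x := fun x => rfl
  have hinj : Function.Injective ψ := by
    intro a b hab
    by_cases ha : a = Quot.mk r v
    · by_cases hb : b = Quot.mk r v
      · exact ha.trans hb.symm
      · exfalso
        simp only [ψ, if_pos ha, if_neg hb] at hab
        cases hab
    · by_cases hb : b = Quot.mk r v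
      · exfalso
        simp only [ψ, if_neg ha, if_pos hb] at hab
        cases hab
      · simp only [ψ, if_neg ha, if_neg hb, Sum.inl.injEq] at hab
        obtain ⟨x, rfl⟩ := Quot.exists_rep a
        obtain ⟨y, rfl⟩ := Quot.exists_rep b
        rw [hφ, hφ] at hab
        have hxy := Quot.eq.mp hab
        rcases G.eqvGen_insert hvw hxy with h | ⟨hx, hy⟩
        · exact Quot.eqvGen_sound h
        · have hxw : Relation.EqvGen r x w := by
            rcases hx with h | h
            · exact absurd (Quot.eqvGen_sound h) ha
            · exact h
          have hyw : Relation.EqvGen r y w := by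
            rcases hy with h | h
            · exact absurd (Quot.eqvGen_sound h) hb
            · exact h
          exact (Quot.eqvGen_sound hxw).trans (Quot.eqvGen_sound hyw).symm
  calc G.ccount F = Nat.card (Quot r) := rfl
    _ ≤ Nat.card (Quot r' ⊕ Unit) := Nat.card_le_card_of_injective ψ hinj
    _ = Nat.card (Quot r') + 1 := by rw [Nat.card_sum]; simp
    _ = G.ccount (insert e F) + 1 := rfl

lemma ccount_le_union_finset [Finite V] (F : Set E) (B : Finset E) :
    G.ccount F ≤ G.ccount (F ∪ ↑B) + B.card := by
  classical
  induction B using Finset.induction_on with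
  | empty => simp
  | @insert a B haB ih =>
    have h1 : G.ccount (F ∪ ↑B) ≤ G.ccount (insert a (F ∪ ↑B)) + 1 :=
      G.ccount_le_insert (F ∪ ↑B) a
    have h2 : F ∪ ↑(insert a B) = insert a (F ∪ ↑B) := by
      ext x
      simp only [Finset.coe_insert, Set.mem_union, Set.mem_insert_iff]
      tauto
    rw [h2, Finset.card_insert_of_notMem haB]
    omega

lemma ccount_le_union [Finite V] [Finite E] (F A : Set E) :
    G.ccount F ≤ G.ccount (F ∪ A) + A.ncard := by
  have hA : A.Finite := A.toFinite
  have h1 : A.ncard = hA.toFinset.card := Set.ncard_eq_toFinset_card A hA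
  have h2 : F ∪ ↑hA.toFinset = F ∪ A := by rw [hA.coe_toFinset]
  rw [h1, ← h2]
  exact G.ccount_le_union_finset F hA.toFinset

/-- deleting a non-bridge does not change the components -/
lemma ccount_diff_of_noBridges [Finite V] {F : Set E} (hF : G.NoBridgesOn F) {e : E}
    (he : e ∈ F) : G.ccount F = G.ccount (F \ {e}) := by
  apply ccount_congr
  intro a b
  rw [eqvGen_iff_rtg (G.adjOn_symm F), eqvGen_iff_rtg (G.adjOn_symm (F \ {e}))]
  constructor
  · exact hF e he a b
  · exact fun h => ReflTransGen.mono (fun x y => G.adjOn_mono Set.diff_subset) _ _ h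

/-- the contraction of a connected graph is connected (one component) -/
lemma numComponents_contract_eq_one [Nonempty V] (hconn : G.Connected) (S : Set E) :
    (G.contract S).numComponents = 1 := by
  rw [Multigraph.numComponents, Nat.card_eq_one_iff_unique]
  constructor
  · constructor
    intro x y
    induction x using Quot.ind with | _ x =>
    induction y using Quot.ind with | _ y =>
    induction x using Quot.ind with | _ v =>
    induction y using Quot.ind with | _ w =>
    have h := hconn v w
    induction h with
    | refl => rfl
    | @tail b c _ hstep ih =>
      refine ih.trans ?_
      obtain ⟨f, _, hf⟩ := hstep
      by_cases hfS : f ∈ S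
      · apply Quot.sound
        refine ⟨⟨f, hfS⟩, Set.notMem_empty _, ?_⟩
        show (G.ends f).map (Quot.mk (G.compRel S)) = _
        rw [hf, Sym2.map_pair_eq]
      · congr 1
        exact Quot.sound ⟨f, hfS, hf⟩
  · exact ⟨Quot.mk _ (Quot.mk _ (Classical.arbitrary V))⟩

end Multigraph

/-- Let Γ be a finite connected multigraph with no separating edges and
let S, T belong to the poset SP_Γ of subsets of E(Γ) whose deletion leaves a bridgeless
graph, ordered by reverse inclusion. The codimension codim(S) := b₁(Γ(S)) is strictly
order-reversing: if S ⊊ T then b₁(Γ(S)) < b₁(Γ(T)). -/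
theorem stmt10 {V E : Type} [Finite V] [Finite E] (G : Multigraph V E)
    (hconn : G.Connected) (hbl : G.Bridgeless) (S T : Set E)
    (hS : G.NoBridgesOn Sᶜ) (hT : G.NoBridgesOn Tᶜ) (hST : S ⊂ T) :
    (G.contract S).b1 < (G.contract T).b1 := by
  classical
  obtain ⟨hsub, hne⟩ := Set.ssubset_iff_subset_ne.mp hST
  obtain ⟨e, heT, heS⟩ := Set.exists_of_ssubset hST
  have hV : Nonempty V := Sym2.ind (fun v _ => ⟨v⟩) (G.ends e)
  -- notation
  have hcompS : G.compRel S = G.adjOn Sᶜ := rfl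
  have hcompT : G.compRel T = G.adjOn Tᶜ := rfl
  -- counts
  set k := (T \ S).ncard with hk
  have hkcard : S.ncard + k = T.ncard := by
    rw [hk, add_comm]
    exact Set.ncard_diff_add_ncard_of_subset hsub
  have heTS : e ∈ T \ S := ⟨heT, heS⟩
  have hk1 : ((T \ S) \ {e}).ncard + 1 = k := Set.ncard_diff_singleton_add_one heTS
  -- the union identity
  have hunion : Tᶜ ∪ ((T \ S) \ {e}) = Sᶜ \ {e} := by
    ext x
    simp only [Set.mem_union, Set.mem_diff, Set.mem_compl_iff, Set.mem_singleton_iff]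
    constructor
    · rintro (hx | ⟨⟨hxT, hxS⟩, hxe⟩)
      · exact ⟨fun hxS => hx (hsub hxS), fun hxe => hx (hxe ▸ heT)⟩
      · exact ⟨hxS, hxe⟩
    · rintro ⟨hxS, hxe⟩
      by_cases hxT : x ∈ T
      · exact Or.inr ⟨⟨hxT, hxS⟩, hxe⟩
      · exact Or.inl hxT
  -- main component count chain
  have hstep1 : G.ccount Tᶜ ≤ G.ccount (Sᶜ \ {e}) + ((T \ S) \ {e}).ncard := by
    have := G.ccount_le_union Tᶜ ((T \ S) \ {e})
    rwa [hunion] at this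
  have hstep2 : G.ccount Sᶜ = G.ccount (Sᶜ \ {e}) :=
    G.ccount_diff_of_noBridges hS heS
  have hmain : G.ccount Tᶜ + 1 ≤ G.ccount Sᶜ + k := by omega
  -- unfold b1
  have hb1 : ∀ (U : Set E), G.NoBridgesOn Uᶜ →
      (G.contract U).b1 = (U.ncard : ℤ) - (G.ccount Uᶜ : ℤ) + 1 := by
    intro U _
    rw [Multigraph.b1, G.numComponents_contract_eq_one hconn U]
    have h1 : Nat.card {e // e ∈ U} = U.ncard := Nat.card_coe_set_eq U
    have h2 : Nat.card (Quot (G.compRel U)) = G.ccount Uᶜ := rfl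
    rw [h1, h2]
    push_cast
    ring
  rw [hb1 S hS, hb1 T hT]
  have hcardST : (S.ncard : ℤ) + k = T.ncard := by exact_mod_cast hkcard
  have hk0 : 1 ≤ k := by omega
  have : (G.ccount Tᶜ : ℤ) + 1 ≤ (G.ccount Sᶜ : ℤ) + k := by exact_mod_cast hmain
  omega
end

section
/- Let X be a connected nodal curve free from separating nodes. The number of curves C1-equivalent to X (up to isomorphism) is at most the product over all C1-sets S of 2^{#S−1}·(#S−1)!. -/
/-! A combinatorial model for the curves C1-equivalent to a fixed nodal curve X free from
separating nodes. The C1-sets S of X are indexed by `ι`, and the C1-set indexed by `i` has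
cardinality `h i`. The partial normalization Y_S at a C1-set S of cardinality n has n
connected components, each carrying two of the 2n gluing points; we model the gluing
points of S by `Fin n × Bool` (the two points (j, true), (j, false) lying on the j-th
component). A curve C1-equivalent to X is determined by a gluing datum for each C1-set:
a matching μ of the gluing points into nodes — a fixed-point-free involution — such that
the resulting graph Γ_X(S) (vertices: the n components, joined by the strands of μ and by
the components themselves) is connected, i.e. a cycle. -/

/-- The involution exchanging the two gluing points on each connected component. -/
def flipPerm (n : ℕ) : Equiv.Perm (Fin n × Bool) :=
  Function.Involutive.toPerm (fun p => (p.1, !p.2)) (by intro p; simp)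

/-- `μ` is an admissible gluing for a C1-set of cardinality `n`: a fixed-point-free
involution of the 2n gluing points such that gluing the n two-pointed components along μ
yields a connected (cycle) curve. -/
def IsAdmissibleGluing (n : ℕ) (μ : Equiv.Perm (Fin n × Bool)) : Prop :=
  (∀ p, μ (μ p) = p) ∧ (∀ p, μ p ≠ p) ∧
    ∀ p q : Fin n × Bool,
      ∃ g ∈ Subgroup.closure ({μ, flipPerm n} : Set (Equiv.Perm (Fin n × Bool))), g p = q

/-! Write `s = flipPerm n * μ`: cross the node at a gluing point, then move to the other gluing
point of the component reached. Since `flipPerm n` and `μ` are involutions, `flipPerm n`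
conjugates `s` to `s⁻¹`. Hence the points in the `s`-cycle of a base point `p`, together with
their flips, form a set stable under `μ` and `flipPerm n`, which is everything by connectedness;
and as neither involution has fixed points, no point lies in the `s`-cycle of its own flip. So the
`s`-cycle of `p` meets every component exactly once, `p` has period `n`, and `μ` is recovered from
the walk `s ^ k p`, `0 < k < n`. For `p = (0, false)` this walk visits the other `n - 1`
components in some order, at one of the two gluing points of each: at most
`2 ^ (n - 1) * (n - 1)!` possibilities. -/

open Equiv Equiv.Perm Function
open scoped Pointwise

section Involutions

variable {α : Type*} {φ μ : Perm α}

theorem semiconjBy_mul_inv_of_involutive (hφ : Involutive φ) (hμ : Involutive μ) :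
    SemiconjBy φ (φ * μ) (φ * μ)⁻¹ := by
  have hφ' : φ * φ = 1 := Equiv.ext hφ
  have hμ' : μ * μ = 1 := Equiv.ext hμ
  rw [SemiconjBy, ← mul_assoc, hφ', one_mul, mul_inv_rev, inv_mul_cancel_right]
  exact eq_inv_of_mul_eq_one_left hμ'

theorem apply_zpow_mul_apply (hφ : Involutive φ) (hμ : Involutive μ) (k : ℤ) (x : α) :
    φ (((φ * μ) ^ k) x) = ((φ * μ) ^ (-k)) (φ x) := by
  have := DFunLike.congr_fun ((semiconjBy_mul_inv_of_involutive hφ hμ).zpow_right k) x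
  rwa [mul_apply, mul_apply, inv_zpow'] at this

theorem not_sameCycle_apply_self (hφ : Involutive φ) (hφ₀ : ∀ x, φ x ≠ x)
    (hμ : Involutive μ) (hμ₀ : ∀ x, μ x ≠ x) (x : α) : ¬ (φ * μ).SameCycle x (φ x) := by
  -- With `s = φ * μ`: `s ^ (2 * d) x = φ x` makes `s ^ d x` a fixed point of `φ`, and
  -- `s ^ (2 * d + 1) x = φ x` makes it a fixed point of `μ`.
  rintro ⟨i, hi⟩
  obtain ⟨d, rfl | rfl⟩ := Int.even_or_odd' i
  · apply hφ₀ (((φ * μ) ^ d) x)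
    rw [apply_zpow_mul_apply hφ hμ, ← hi, ← mul_apply, ← zpow_add]
    ring_nf
  · apply hμ₀ (((φ * μ) ^ d) x)
    apply hφ.injective
    calc φ (μ (((φ * μ) ^ d) x)) = ((φ * μ) ^ (d + 1)) x := by
          rw [add_comm, zpow_one_add, mul_apply]; rfl
      _ = ((φ * μ) ^ (-d) * (φ * μ) ^ (2 * d + 1)) x := by rw [← zpow_add]; ring_nf
      _ = φ (((φ * μ) ^ d) x) := by rw [mul_apply, hi, apply_zpow_mul_apply hφ hμ]

theorem mem_stabilizer_set_of_involutive {t : Perm α} (ht : Involutive t) {S : Set α}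
    (hS : Set.MapsTo t S S) : t ∈ MulAction.stabilizer (Perm α) S :=
  MulAction.mem_stabilizer_set.2 fun x => ⟨fun h => ht x ▸ hS h, fun h => hS h⟩

theorem sameCycle_or_sameCycle_apply (hφ : Involutive φ) (hμ : Involutive μ)
    (htrans : ∀ p q, ∃ g ∈ Subgroup.closure {μ, φ}, g p = q) (p q : α) :
    (φ * μ).SameCycle p q ∨ (φ * μ).SameCycle p (φ q) := by
  set S : Set α := {q | (φ * μ).SameCycle p q ∨ (φ * μ).SameCycle p (φ q)}
  have hle : Subgroup.closure {μ, φ} ≤ MulAction.stabilizer (Perm α) S := by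
    rw [Subgroup.closure_le, Set.insert_subset_iff, Set.singleton_subset_iff]
    refine ⟨mem_stabilizer_set_of_involutive hμ ?_,
      mem_stabilizer_set_of_involutive hφ fun x hx => ?_⟩
    · rintro x (hx | hx)
      · exact Or.inr (sameCycle_apply_right.2 hx)
      · have hμx : (φ * μ).symm (φ x) = μ x := by rw [symm_apply_eq, mul_apply, hμ x]
        exact Or.inl (hμx ▸ sameCycle_symm_apply_right.2 hx)
    · simpa [S, hφ x, or_comm] using hx
  obtain ⟨g, hg, rfl⟩ := htrans p q
  exact (MulAction.mem_stabilizer_set.1 (hle hg) p).2 (Or.inl .rfl)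

theorem Function.Involutive.eq_of_eqOn_of_mapsTo_compl {f g : α → α} (hf : Involutive f)
    (hg : Involutive g) {A : Set α} (heq : Set.EqOn f g A) (hmaps : Set.MapsTo f Aᶜ A) :
    f = g := by
  funext x
  by_cases hx : x ∈ A
  · exact heq hx
  · calc f x = g (g (f x)) := (hg _).symm
      _ = g (f (f x)) := by rw [heq (hmaps hx)]
      _ = g x := by rw [hf x]

end Involutions

section Gluing

variable {n : ℕ} {μ μ' : Perm (Fin n × Bool)}

theorem flipPerm_apply (p : Fin n × Bool) : flipPerm n p = (p.1, !p.2) := rfl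

theorem involutive_flipPerm : Involutive (flipPerm n) := fun p => by simp [flipPerm_apply]

theorem flipPerm_apply_ne (p : Fin n × Bool) : flipPerm n p ≠ p := by
  simp [flipPerm_apply, Prod.ext_iff]

theorem eq_or_eq_flipPerm_of_fst_eq {p q : Fin n × Bool} (h : p.1 = q.1) :
    p = q ∨ p = flipPerm n q := by
  obtain ⟨a, b⟩ := p
  obtain ⟨c, d⟩ := q
  cases b <;> cases d <;> simp_all [flipPerm_apply]

namespace IsAdmissibleGluing

theorem sameCycle_or (hμ : IsAdmissibleGluing n μ) (p q : Fin n × Bool) :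
    (flipPerm n * μ).SameCycle p q ∨ (flipPerm n * μ).SameCycle p (flipPerm n q) :=
  sameCycle_or_sameCycle_apply involutive_flipPerm hμ.1 hμ.2.2 p q

theorem eq_of_sameCycle_of_fst_eq (hμ : IsAdmissibleGluing n μ) {p q r : Fin n × Bool}
    (hq : (flipPerm n * μ).SameCycle p q) (hr : (flipPerm n * μ).SameCycle p r)
    (h : q.1 = r.1) : q = r :=
  (eq_or_eq_flipPerm_of_fst_eq h).resolve_right fun hqr =>
    not_sameCycle_apply_self involutive_flipPerm flipPerm_apply_ne hμ.1 hμ.2.1 r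
      (hqr ▸ hr.symm.trans hq)

theorem injOn_Iio_minimalPeriod_fst_pow_apply (hμ : IsAdmissibleGluing n μ) (p : Fin n × Bool) :
    Set.InjOn (fun k : ℕ => (((flipPerm n * μ) ^ k) p).1)
      (Set.Iio (minimalPeriod (flipPerm n * μ) p)) := fun j hj k hk h =>
  iterate_injOn_Iio_minimalPeriod hj hk <| by
    simpa only [← Perm.coe_pow] using hμ.eq_of_sameCycle_of_fst_eq
      (sameCycle_pow_right.2 .rfl) (sameCycle_pow_right.2 .rfl) h

theorem exists_lt_minimalPeriod_fst_pow_apply_eq (hμ : IsAdmissibleGluing n μ)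
    (p : Fin n × Bool) (j : Fin n) :
    ∃ k < minimalPeriod (flipPerm n * μ) p, (((flipPerm n * μ) ^ k) p).1 = j := by
  have hpos : 0 < minimalPeriod (flipPerm n * μ) p :=
    IsPeriodicPt.minimalPeriod_pos (orderOf_pos _) <| by
      rw [IsPeriodicPt, IsFixedPt, ← Perm.coe_pow, pow_orderOf_eq_one, Perm.coe_one, id]
  obtain ⟨q, hq, rfl⟩ : ∃ q, (flipPerm n * μ).SameCycle p q ∧ q.1 = j :=
    (hμ.sameCycle_or p (j, false)).elim (fun h => ⟨_, h, rfl⟩) fun h => ⟨_, h, rfl⟩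
  obtain ⟨i, rfl⟩ := hq.exists_nat_pow_eq
  refine ⟨i % minimalPeriod _ p, Nat.mod_lt _ hpos, ?_⟩
  rw [Perm.coe_pow, Perm.coe_pow, iterate_mod_minimalPeriod_eq]

theorem minimalPeriod_eq (hμ : IsAdmissibleGluing n μ) (p : Fin n × Bool) :
    minimalPeriod (flipPerm n * μ) p = n := by
  have hbij : Bijective fun k : Fin (minimalPeriod (flipPerm n * μ) p) =>
      (((flipPerm n * μ) ^ (k : ℕ)) p).1 :=
    ⟨fun j k h => Fin.ext (hμ.injOn_Iio_minimalPeriod_fst_pow_apply p j.2 k.2 h), fun j =>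
      let ⟨k, hk, h⟩ := hμ.exists_lt_minimalPeriod_fst_pow_apply_eq p j; ⟨⟨k, hk⟩, h⟩⟩
  simpa only [Fintype.card_fin] using Fintype.card_of_bijective hbij

theorem injOn_Iio_fst_pow_apply (hμ : IsAdmissibleGluing n μ) (p : Fin n × Bool) :
    Set.InjOn (fun k : ℕ => (((flipPerm n * μ) ^ k) p).1) (Set.Iio n) := by
  simpa only [hμ.minimalPeriod_eq p] using hμ.injOn_Iio_minimalPeriod_fst_pow_apply p

theorem pow_mod_apply (hμ : IsAdmissibleGluing n μ) (p : Fin n × Bool) (k : ℕ) :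
    ((flipPerm n * μ) ^ (k % n)) p = ((flipPerm n * μ) ^ k) p := by
  have h := iterate_mod_minimalPeriod_eq (f := flipPerm n * μ) (x := p) (n := k)
  rwa [hμ.minimalPeriod_eq p, ← Perm.coe_pow, ← Perm.coe_pow] at h

theorem eq_of_pow_apply_eq (hμ : IsAdmissibleGluing n μ) (hμ' : IsAdmissibleGluing n μ')
    (p : Fin n × Bool) (h : ∀ k < n, ((flipPerm n * μ) ^ k) p = ((flipPerm n * μ') ^ k) p) :
    μ = μ' := by
  have hwalk (k : ℕ) : ((flipPerm n * μ) ^ k) p = ((flipPerm n * μ') ^ k) p := by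
    rw [← hμ.pow_mod_apply, ← hμ'.pow_mod_apply]
    exact h _ (Nat.mod_lt _ p.1.pos)
  have heqOn : Set.EqOn μ μ' {x | (flipPerm n * μ).SameCycle p x} := by
    intro x hx
    obtain ⟨k, rfl⟩ := hx.exists_nat_pow_eq
    have := congrArg (flipPerm n) (hwalk (k + 1))
    rw [pow_succ', pow_succ', mul_apply, mul_apply, mul_apply, mul_apply, involutive_flipPerm,
      involutive_flipPerm, hwalk k] at this
    rwa [hwalk k]
  have hmaps : Set.MapsTo μ {x | (flipPerm n * μ).SameCycle p x}ᶜ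
      {x | (flipPerm n * μ).SameCycle p x} := by
    intro x hx
    have hμx : (flipPerm n * μ).symm (flipPerm n x) = μ x := by
      rw [symm_apply_eq, mul_apply, hμ.1 x]
    exact hμx ▸ sameCycle_symm_apply_right.2 ((hμ.sameCycle_or p x).resolve_left hx)
  exact DFunLike.coe_injective (Involutive.eq_of_eqOn_of_mapsTo_compl hμ.1 hμ'.1 heqOn hmaps)

end IsAdmissibleGluing

def gluingCode (m : ℕ) (μ : {μ : Perm (Fin (m + 1) × Bool) // IsAdmissibleGluing (m + 1) μ}) :
    (Fin m ↪ {j : Fin (m + 1) // j ≠ 0}) × (Fin m → Bool) :=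
  have hinj := μ.2.injOn_Iio_fst_pow_apply (0, false)
  have hlt (k : Fin m) : (k : ℕ) + 1 ∈ Set.Iio (m + 1) := Nat.succ_lt_succ k.2
  (⟨fun k => ⟨(((flipPerm (m + 1) * μ.1) ^ (k + 1 : ℕ)) (0, false)).1,
      fun h => k.val.succ_ne_zero (hinj (hlt k) m.succ_pos h)⟩,
    fun a b h => Fin.ext (Nat.succ_injective (hinj (hlt a) (hlt b) (congrArg Subtype.val h)))⟩,
    fun k => (((flipPerm (m + 1) * μ.1) ^ (k + 1 : ℕ)) (0, false)).2)

theorem gluingCode_injective (m : ℕ) : Injective (gluingCode m) := by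
  rintro ⟨μ, hμ⟩ ⟨μ', hμ'⟩ h
  refine Subtype.ext (hμ.eq_of_pow_apply_eq hμ' (0, false) fun k hk => ?_)
  obtain _ | k := k
  · rfl
  · have hk' : k < m := by omega
    have hfst := congrArg Subtype.val (DFunLike.congr_fun (congrArg Prod.fst h) ⟨k, hk'⟩)
    have hsnd := congrFun (congrArg Prod.snd h) ⟨k, hk'⟩
    exact Prod.ext hfst hsnd

theorem card_admissibleGluing_le (n : ℕ) :
    Nat.card {μ : Perm (Fin n × Bool) // IsAdmissibleGluing n μ} ≤
      2 ^ (n - 1) * (n - 1).factorial := by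
  obtain _ | m := n
  · simpa using Finite.card_le_one_iff_subsingleton.2 inferInstance
  · calc Nat.card {μ : Perm (Fin (m + 1) × Bool) // IsAdmissibleGluing (m + 1) μ}
        ≤ Nat.card ((Fin m ↪ {j : Fin (m + 1) // j ≠ 0}) × (Fin m → Bool)) :=
          Nat.card_le_card_of_injective _ (gluingCode_injective m)
      _ = 2 ^ m * m.factorial := by
        simp [Nat.card_eq_fintype_card, Fintype.card_embedding_eq, Nat.descFactorial_self,
          mul_comm]

end Gluing

theorem stmt14_general {ι : Type} [Fintype ι] (h : ι → ℕ)
    (C : Type) (f : C → ∀ i, {μ : Equiv.Perm (Fin (h i) × Bool) // IsAdmissibleGluing (h i) μ})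
    (hf : Function.Injective f) :
    Nat.card C ≤ ∏ i, 2 ^ (h i - 1) * Nat.factorial (h i - 1) :=
  calc Nat.card C
      ≤ Nat.card (∀ i, {μ : Perm (Fin (h i) × Bool) // IsAdmissibleGluing (h i) μ}) :=
        Nat.card_le_card_of_injective f hf
    _ = ∏ i, Nat.card {μ : Perm (Fin (h i) × Bool) // IsAdmissibleGluing (h i) μ} := Nat.card_pi
    _ ≤ ∏ i, 2 ^ (h i - 1) * Nat.factorial (h i - 1) :=
        Finset.prod_le_prod' fun i _ => card_admissibleGluing_le (h i)

/-- Let X be a connected nodal curve free from separating nodes, with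
C1-sets of cardinalities h i (i ∈ ι). Since every curve C1-equivalent to X is determined
(up to isomorphism) by a choice, for each C1-set S, of an admissible gluing of its
gluing points, the number of curves C1-equivalent to X is at most
∏_S 2^{#S−1}·(#S−1)!. -/
theorem stmt14 {ι : Type} [Fintype ι] (h : ι → ℕ) (hpos : ∀ i, 1 ≤ h i)
    (C : Type) (f : C → ∀ i, {μ : Equiv.Perm (Fin (h i) × Bool) // IsAdmissibleGluing (h i) μ})
    (hf : Function.Injective f) :
    Nat.card C ≤ ∏ i, 2 ^ (h i - 1) * Nat.factorial (h i - 1) :=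
  stmt14_general h C f hf
end
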